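/- arXiv:1709.03193 — 4 statements merged into one kernel-verified Lean document; each statement's English description precedes it below -/
import Mathlib

section
/- For an invertible real n×n matrix A, the following are equivalent: (1) there exists a real n×n matrix B with A = exp(B); (2) there exists a real n×n matrix C with A = C². -/
set_option maxHeartbeats 1600000

open NormedSpace

/-- Key identity: `(1 + t•M) * ∑_{j<k} (-t)^j • M^(j+1) = M - (-t)^k • M^(k+1)`. -/
private lemma key_ident {𝔸 : Type*} [CommRing 𝔸] [Algebra ℝ 𝔸] (M : 𝔸) (t : ℝ) (k : ℕ) :
    (1 + t • M) * (∑ j ∈ Finset.range k, ((-t) ^ j) • M ^ (j + 1))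
      = M - ((-t) ^ k) • M ^ (k + 1) := by
  induction k with
  | zero => simp
  | succ k ih =>
    have hb : (1 + t • M) * ((-t) ^ k • M ^ (k + 1))
        = (-t) ^ k • M ^ (k + 1) - (-t) ^ (k + 1) • M ^ (k + 1 + 1) := by
      rw [add_mul, one_mul]
      have h2 : (t • M) * ((-t) ^ k • M ^ (k + 1)) = -((-t) ^ (k+1) • M ^ (k + 1 + 1)) := by
        rw [smul_mul_smul_comm, ← pow_succ']
        have h1 : t * (-t) ^ k = -((-t) ^ (k + 1)) := by
          rw [pow_succ']; ring
        rw [h1, neg_smul]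
      rw [h2]
      abel
    rw [Finset.sum_range_succ, mul_add, ih, hb]
    abel

lemma exp_trunc_log {𝔸 : Type*} [NormedCommRing 𝔸] [NormedAlgebra ℝ 𝔸] [CompleteSpace 𝔸]
    (M : 𝔸) (m : ℕ) (hM : M ^ m = 0) :
    exp (∑ j ∈ Finset.range m, ((-1 : ℝ) ^ j / (j + 1)) • M ^ (j + 1)) = 1 + M := by
  set g : ℝ → 𝔸 := fun t => ∑ j ∈ Finset.range m, (((-1:ℝ)^j / (j+1)) * t^(j+1)) • M^(j+1)
    with hgdef
  have hg1 : g 1 = ∑ j ∈ Finset.range m, ((-1 : ℝ) ^ j / (j + 1)) • M ^ (j + 1) := by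
    simp [hgdef]
  have hg0 : g 0 = 0 := by simp [hgdef]
  set g' : ℝ → 𝔸 := fun t => ∑ j ∈ Finset.range m, ((-t) ^ j) • M ^ (j + 1) with hg'def
  have hgderiv : ∀ t : ℝ, HasDerivAt g (g' t) t := by
    intro t
    apply HasDerivAt.fun_sum
    intro j hj
    have h1 : HasDerivAt (fun t : ℝ => ((-1:ℝ)^j / (j+1)) * t^(j+1))
        ((-t) ^ j) t := by
      have := (hasDerivAt_pow (j+1) t).const_mul ((-1:ℝ)^j / (j+1))
      refine this.congr_deriv ?_
      have : ((j:ℝ) + 1) ≠ 0 := by positivity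
      field_simp
      simp only [Nat.add_sub_cancel]; push_cast; ring
    exact h1.smul_const _
  -- key : (1 + t • M) * g' t = M
  have hkey : ∀ t : ℝ, (1 + t • M) * g' t = M := by
    intro t
    rw [hg'def]
    rw [key_ident M t m]
    rw [pow_succ, hM, zero_mul, smul_zero, sub_zero]
  -- φ t = exp(-(g t)) * (1 + t • M) is constant
  set φ : ℝ → 𝔸 := fun t => exp (-(g t)) * (1 + t • M) with hφdef
  have hφderiv : ∀ t : ℝ, HasDerivAt φ 0 t := by
    intro t
    have hexp : HasDerivAt (fun t => exp (-(g t))) (exp (-(g t)) * -(g' t)) t := by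
      have h2 : HasDerivAt (fun t => -(g t)) (-(g' t)) t := (hgderiv t).neg
      have h3 := (hasFDerivAt_exp (𝕂 := ℝ) (x := -(g t))).comp_hasDerivAt t h2
      simpa [Function.comp_def, smul_eq_mul] using h3
    have hlin : HasDerivAt (fun t : ℝ => 1 + t • M) M t := by
      simpa using ((hasDerivAt_id t).smul_const M).const_add 1
    have := hexp.fun_mul hlin
    convert this using 1
    have h4 : g' t * (1 + t • M) = M := by rw [mul_comm]; exact hkey t
    calc (0 : 𝔸) = exp (-(g t)) * -(M) + exp (-(g t)) * M := by ring
    _ = exp (-(g t)) * -(g' t * (1 + t • M)) + exp (-(g t)) * M := by rw [h4]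
    _ = exp (-(g t)) * -(g' t) * (1 + t • M) + exp (-(g t)) * M := by ring
  have hconst : φ 1 = φ 0 := by
    apply is_const_of_deriv_eq_zero (fun t => (hφderiv t).differentiableAt)
    intro t
    exact (hφderiv t).deriv
  have hφ0 : φ 0 = 1 := by simp [hφdef, hg0]
  have h5 : exp (-(g 1)) * (1 + M) = 1 := by
    have := hconst.trans hφ0
    simpa [hφdef] using this
  have h6 : exp (g 1) * (exp (-(g 1)) * (1 + M)) = exp (g 1) := by rw [h5, mul_one]
  letI : NormedAlgebra ℚ 𝔸 := NormedAlgebra.restrictScalars ℚ ℝ 𝔸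
  rw [← mul_assoc, ← exp_add, add_neg_cancel, exp_zero, one_mul] at h6
  rw [← hg1, h6]

open NormedSpace

lemma exp_mul_eq_of_mul_eq_zero {𝔸 : Type*} [NormedRing 𝔸] [NormedAlgebra ℂ 𝔸]
    [CompleteSpace 𝔸] {x y : 𝔸} (h : x * y = 0) : exp x * y = y := by
  rw [exp_eq_tsum (𝕂 := ℂ), ← Summable.tsum_mul_right y (expSeries_summable' (𝕂 := ℂ) x),
    tsum_eq_single 0]
  · simp
  · intro k hk
    obtain ⟨j, rfl⟩ := Nat.exists_eq_succ_of_ne_zero hk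
    rw [smul_mul_assoc, pow_succ, mul_assoc, h, mul_zero, smul_zero]

lemma exp_smul_idem {𝔸 : Type*} [NormedRing 𝔸] [NormedAlgebra ℂ 𝔸]
    [CompleteSpace 𝔸] {e : 𝔸} (he : IsIdempotentElem e) (c : ℂ) :
    exp (c • e) = 1 + (Complex.exp c - 1) • e := by
  have hsum0 : Summable fun k : ℕ => ((k.factorial : ℂ))⁻¹ • (c • e) ^ k :=
    expSeries_summable' (𝕂 := ℂ) (c • e)
  rw [exp_eq_tsum (𝕂 := ℂ)]
  beta_reduce
  rw [Summable.tsum_eq_zero_add hsum0]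
  have hterm : ∀ k : ℕ, (((k+1).factorial : ℂ))⁻¹ • (c • e) ^ (k+1)
      = ((((k+1).factorial : ℂ))⁻¹ * c ^ (k+1)) • e := by
    intro k
    rw [smul_pow, he.pow_succ_eq, smul_smul]
  have hs2 : Summable fun k : ℕ => (((k+1).factorial : ℂ))⁻¹ * c ^ (k+1) := by
    have := expSeries_summable' (𝕂 := ℂ) c
    simp only [smul_eq_mul] at this
    exact (summable_nat_add_iff (f := fun k : ℕ => ((k.factorial : ℂ))⁻¹ * c ^ k) 1).2 this
  calc ((0).factorial : ℂ)⁻¹ • (c • e) ^ 0 + ∑' k : ℕ, (((k+1).factorial : ℂ))⁻¹ • (c • e) ^ (k+1)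
      = 1 + ∑' k : ℕ, ((((k+1).factorial : ℂ))⁻¹ * c ^ (k+1)) • e := by
        simp only [hterm]; simp
    _ = 1 + (∑' k : ℕ, (((k+1).factorial : ℂ))⁻¹ * c ^ (k+1)) • e := by
        rw [Summable.tsum_smul_const hs2]
    _ = 1 + (Complex.exp c - 1) • e := by
        congr 2
        have hc : Complex.exp c = ∑' k : ℕ, ((k.factorial : ℂ))⁻¹ * c ^ k := by
          rw [Complex.exp_eq_exp_ℂ, exp_eq_tsum (𝕂 := ℂ)]
          simp [smul_eq_mul]
        have := Summable.tsum_eq_zero_add (f := fun k : ℕ => ((k.factorial : ℂ))⁻¹ * c ^ k)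
          (by simpa [smul_eq_mul] using expSeries_summable' (𝕂 := ℂ) c)
        rw [hc, this]
        simp

lemma block_mul {R : Type*} [Ring R] {c x y : R} (hxy : x * y = 0) (hyx : y * x = 0)
    (hcx : Commute c x) (hcy : Commute c y) :
    (1 - x + c * x) * (1 - y + c * y) = 1 - (x + y) + c * (x + y) := by
  have h1 : x * (c * y) = 0 := by rw [← mul_assoc, ← hcx.eq, mul_assoc, hxy, mul_zero]
  have h2 : (c * x) * y = 0 := by rw [mul_assoc, hxy, mul_zero]
  have h3 : (c * x) * (c * y) = 0 := by rw [mul_assoc, h1, mul_zero]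
  simp only [mul_add, add_mul, sub_mul, mul_sub, mul_one, one_mul, hxy, h1, h2, h3]
  abel

open NormedSpace

set_option maxHeartbeats 1000000

lemma exp_log_nilpotent_matrix {k : ℕ} (N : Matrix (Fin k) (Fin k) ℂ) (m : ℕ) (hm : N ^ m = 0) :
    exp (∑ j ∈ Finset.range m, ((-1 : ℝ) ^ j / ((j : ℝ) + 1)) • N ^ (j + 1)) = 1 + N := by
  letI : NormedRing (Matrix (Fin k) (Fin k) ℂ) := Matrix.linftyOpNormedRing
  letI : NormedAlgebra ℝ (Matrix (Fin k) (Fin k) ℂ) := Matrix.linftyOpNormedAlgebra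
  set S := Algebra.adjoin ℝ ({N} : Set (Matrix (Fin k) (Fin k) ℂ)) with hS
  have hmem : ∀ a : S, ∃ p : Polynomial ℝ, Polynomial.aeval N p = (a : Matrix (Fin k) (Fin k) ℂ) := by
    rintro ⟨a, ha⟩
    rw [hS, Algebra.adjoin_singleton_eq_range_aeval ℝ N] at ha
    obtain ⟨p, hp⟩ := ha
    exact ⟨p, hp⟩
  have hcomm' : ∀ a b : S, (a : Matrix (Fin k) (Fin k) ℂ) * b = (b : Matrix (Fin k) (Fin k) ℂ) * a := by
    intro a b
    obtain ⟨pa, hpa⟩ := hmem a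
    obtain ⟨pb, hpb⟩ := hmem b
    rw [← hpa, ← hpb, ← map_mul, ← map_mul, mul_comm]
  letI : NormedCommRing S :=
    { (inferInstance : NormedRing S) with
      mul_comm := fun a b => Subtype.ext (by
        show ((a * b : S) : Matrix (Fin k) (Fin k) ℂ) = ((b * a : S) : _)
        push_cast
        exact hcomm' a b) }
  haveI : FiniteDimensional ℝ (Matrix (Fin k) (Fin k) ℂ) := Module.Finite.matrix
  haveI : FiniteDimensional ℝ S := FiniteDimensional.finiteDimensional_submodule (Subalgebra.toSubmodule S)
  haveI : CompleteSpace S := (Subalgebra.toSubmodule S).complete_of_finiteDimensional.completeSpace_coe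
  set x : S := ⟨N, Algebra.self_mem_adjoin_singleton ℝ N⟩ with hx
  have hxm : x ^ m = 0 := by
    apply Subtype.ext
    push_cast
    exact hm
  have hP1 := exp_trunc_log x m hxm
  letI : NormedAlgebra ℚ S := NormedAlgebra.restrictScalars ℚ ℝ S
  have hval := map_exp S.val (continuous_subtype_val) (∑ j ∈ Finset.range m, ((-1 : ℝ) ^ j / ((j : ℝ) + 1)) • x ^ (j + 1))
  rw [hP1] at hval
  have hsum : S.val (∑ j ∈ Finset.range m, ((-1 : ℝ) ^ j / ((j : ℝ) + 1)) • x ^ (j + 1))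
      = ∑ j ∈ Finset.range m, ((-1 : ℝ) ^ j / ((j : ℝ) + 1)) • N ^ (j + 1) := by
    rw [map_sum]
    refine Finset.sum_congr rfl fun j _ => ?_
    rw [map_smul, map_pow]
    rfl
  rw [hsum] at hval
  have : S.val (1 + x) = 1 + N := by
    rw [map_add, map_one]; rfl
  rw [this] at hval
  exact hval.symm

open NormedSpace Polynomial in
lemma exists_complex_log {k : ℕ} (Cc : Matrix (Fin k) (Fin k) ℂ) (h : IsUnit Cc) :
    ∃ q : Polynomial ℂ, exp (Polynomial.aeval Cc q) = Cc := by
  classical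
  letI : NormedRing (Matrix (Fin k) (Fin k) ℂ) := Matrix.linftyOpNormedRing
  letI : NormedAlgebra ℂ (Matrix (Fin k) (Fin k) ℂ) := Matrix.linftyOpNormedAlgebra
  set p : ℂ[X] := Cc.charpoly with hp
  have hmonic : p.Monic := Cc.charpoly_monic
  have hCH : ∀ r : ℂ[X], p ∣ r → aeval Cc r = 0 := by
    rintro r ⟨s, rfl⟩
    rw [map_mul, Matrix.aeval_self_charpoly, zero_mul]
  set T : Finset ℂ := p.roots.toFinset with hT
  set m : ℂ → ℕ := fun l => p.roots.count l with hm
  set gp : ℂ → ℂ[X] := fun l => (X - C l) ^ m l with hgp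
  have hsplit : p = ∏ l ∈ T, gp l := by
    conv_lhs => rw [(IsAlgClosed.splits p).eq_prod_roots_of_monic hmonic]
    exact Finset.prod_multiset_map_count _ _
  have hcop : ∀ l1 l2 : ℂ, l1 ≠ l2 → IsCoprime (gp l1) (gp l2) := by
    intro l1 l2 hne
    apply IsCoprime.pow
    refine ⟨C (l2 - l1)⁻¹, -(C (l2 - l1)⁻¹), ?_⟩
    have h2 : l2 - l1 ≠ 0 := sub_ne_zero.2 hne.symm
    have : C (l2 - l1)⁻¹ * (X - C l1) + -C (l2 - l1)⁻¹ * (X - C l2)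
        = C ((l2 - l1)⁻¹ * (l2 - l1)) := by
      rw [C_mul, C_sub]
      ring
    rw [this, inv_mul_cancel₀ h2, C_1]
  set hh : ℂ → ℂ[X] := fun l => ∏ mu ∈ T.erase l, gp mu with hhh
  have hfac : ∀ l ∈ T, p = gp l * hh l := by
    intro l hl
    rw [hsplit, ← Finset.mul_prod_erase T gp hl]
  have hcop2 : ∀ l ∈ T, IsCoprime (gp l) (hh l) := by
    intro l hl
    exact IsCoprime.prod_right fun mu hmu => hcop l mu (Finset.ne_of_mem_erase hmu).symm
  have hex : ∀ l ∈ T, ∃ w u : ℂ[X], u * gp l + w * hh l = 1 := by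
    intro l hl
    obtain ⟨u, w, huw⟩ := hcop2 l hl
    exact ⟨w, u, huw⟩
  choose! w u hw using hex
  set qE : ℂ → ℂ[X] := fun l => w l * hh l with hqE
  set E : ℂ → Matrix (Fin k) (Fin k) ℂ := fun l => aeval Cc (qE l) with hE
  have hcomm : ∀ q r : ℂ[X], Commute (aeval Cc q) (aeval Cc r) := by
    intro q r
    show aeval Cc q * aeval Cc r = aeval Cc r * aeval Cc q
    rw [← map_mul, ← map_mul, mul_comm]
  have hdvd_sum : p ∣ (∑ l ∈ T, qE l) - 1 := by
    conv_lhs => rw [hsplit]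
    apply Finset.prod_dvd_of_coprime
    · intro a ha b hb hab
      exact hcop a b hab
    · intro nu hnu
      rw [← Finset.add_sum_erase T qE hnu]
      have h1 : gp nu ∣ qE nu - 1 := ⟨-(u nu), by simp only [hqE]; linear_combination hw nu hnu⟩
      have h2 : gp nu ∣ ∑ l ∈ T.erase nu, qE l := by
        apply Finset.dvd_sum
        intro l hl
        have h3 : gp nu ∣ hh l := by
          apply Finset.dvd_prod_of_mem
          exact Finset.mem_erase.2 ⟨(Finset.ne_of_mem_erase hl).symm, hnu⟩
        have h4 : qE l = w l * hh l := rfl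
        rw [h4]
        exact h3.mul_left _
      have h5 : qE nu + (∑ l ∈ T.erase nu, qE l) - 1 = (qE nu - 1) + ∑ l ∈ T.erase nu, qE l := by
        ring
      rw [h5]
      exact dvd_add h1 h2
  have hsum : ∑ l ∈ T, E l = 1 := by
    have h0 := hCH _ hdvd_sum
    rw [map_sub, map_one, map_sum, sub_eq_zero] at h0
    exact h0.symm ▸ rfl
  have horth : ∀ l1 ∈ T, ∀ l2 ∈ T, l1 ≠ l2 → E l1 * E l2 = 0 := by
    intro l1 h1 l2 h2 hne
    have hdvd : p ∣ qE l1 * qE l2 := by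
      have hgd : gp l2 ∣ hh l1 := by
        apply Finset.dvd_prod_of_mem
        exact Finset.mem_erase.2 ⟨hne.symm, h2⟩
      have h6 : p ∣ hh l1 * hh l2 := by
        rw [hfac l2 h2]
        exact mul_dvd_mul hgd dvd_rfl
      have heq : qE l1 * qE l2 = (w l1 * w l2) * (hh l1 * hh l2) := by
        simp only [hqE]; ring
      rw [heq]
      exact h6.mul_left _
    rw [hE, ← map_mul]
    exact hCH _ hdvd
  have hidem : ∀ l ∈ T, IsIdempotentElem (E l) := by
    intro l hl
    have h1 : ∑ nu ∈ T, E l * E nu = E l * E l :=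
      Finset.sum_eq_single l (fun nu hnu hne => horth l hl nu hnu (Ne.symm hne))
        (fun hna => absurd hl hna)
    have h2 : ∑ nu ∈ T, E l * E nu = E l := by
      rw [← Finset.mul_sum, hsum, mul_one]
    exact h1.symm.trans h2
  have hunit : IsUnit Cc.det := (Matrix.isUnit_iff_isUnit_det Cc).1 h
  have hroot0 : ∀ l ∈ T, l ≠ 0 := by
    intro l hl h0
    have hroot : p.IsRoot l := isRoot_of_mem_roots (Multiset.mem_toFinset.1 hl)
    rw [h0] at hroot
    have hc0 : p.coeff 0 = 0 := by rwa [coeff_zero_eq_eval_zero]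
    have hdet : Cc.det = 0 := by
      rw [Matrix.det_eq_sign_charpoly_coeff, ← hp, hc0, mul_zero]
    rw [hdet] at hunit
    simp at hunit
  have hm1 : ∀ l ∈ T, 1 ≤ m l := by
    intro l hl
    exact (Multiset.count_pos).2 (Multiset.mem_toFinset.1 hl)
  set qN : ℂ → ℂ[X] := fun l => (C l⁻¹ * X - 1) * qE l with hqN
  set N : ℂ → Matrix (Fin k) (Fin k) ℂ := fun l => aeval Cc (qN l) with hN
  have hnilp : ∀ l ∈ T, N l ^ m l = 0 := by
    intro l hl
    obtain ⟨j, hj⟩ : ∃ j, m l = j + 1 := ⟨m l - 1, (Nat.succ_pred_eq_of_pos (hm1 l hl)).symm⟩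
    have hXid : C l⁻¹ * X - 1 = C l⁻¹ * (X - C l) := by
      rw [mul_sub, ← C_mul, inv_mul_cancel₀ (hroot0 l hl), C_1]
    have hdvd : p ∣ qN l ^ m l := by
      have heq : qN l ^ m l = ((C l⁻¹) ^ (j+1) * qE l ^ j) * (gp l * qE l) := by
        rw [show qN l = C l⁻¹ * (X - C l) * qE l from by simp only [hqN]; rw [hXid],
          show gp l = (X - C l) ^ (j+1) from by simp only [hgp, hj], hj, mul_pow, mul_pow]
        ring
      have h2 : p ∣ gp l * qE l := ⟨w l, by rw [hfac l hl]; simp only [hqE]; ring⟩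
      rw [heq]
      exact h2.mul_left _
    rw [hN, ← map_pow]
    exact hCH _ hdvd
  set L : ℂ → Matrix (Fin k) (Fin k) ℂ :=
    fun l => ∑ j ∈ Finset.range (m l), ((-1 : ℝ) ^ j / ((j : ℝ) + 1)) • N l ^ (j + 1) with hL
  have hexpL : ∀ l ∈ T, exp (L l) = 1 + N l := by
    intro l hl
    exact exp_log_nilpotent_matrix (N l) (m l) (hnilp l hl)
  set qL : ℂ → ℂ[X] :=
    fun l => ∑ j ∈ Finset.range (m l), C (((-1 : ℂ) ^ j / ((j : ℂ) + 1))) * (qN l) ^ (j + 1)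
    with hqL
  have hsmulr : ∀ (r : ℝ) (M : Matrix (Fin k) (Fin k) ℂ), r • M = ((r : ℂ)) • M := by
    intro r M
    ext i j
    simp [Matrix.smul_apply, Complex.real_smul]
  have hLval : ∀ l, L l = aeval Cc (qL l) := by
    intro l
    simp only [hL, hqL, map_sum]
    refine Finset.sum_congr rfl fun j _ => ?_
    rw [map_mul, aeval_C, map_pow, hsmulr, Algebra.smul_def]
    congr 1
    push_cast
    ring_nf
  set qD : ℂ → ℂ[X] := fun l => C (Complex.log l) * qE l + qL l with hqD
  set d : ℂ → Matrix (Fin k) (Fin k) ℂ := fun l => aeval Cc (qD l) with hd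
  have hdval : ∀ l, d l = Complex.log l • E l + L l := by
    intro l
    simp only [hd, hqD, map_add, map_mul, aeval_C]
    rw [hLval, Algebra.smul_def, hE]
  have hF : ∀ l ∈ T, exp (d l) = 1 - E l + Cc * E l := by
    intro l hl
    rw [hdval]
    have hsm : Complex.log l • E l = aeval Cc (C (Complex.log l) * qE l) := by
      rw [map_mul, aeval_C, ← Algebra.smul_def]
    have hcom : Commute (Complex.log l • E l) (L l) := by
      rw [hLval l, hsm]
      exact hcomm _ _
    rw [Matrix.exp_add_of_commute _ _ hcom]
    erw [exp_smul_idem (hidem l hl)]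
    rw [Complex.exp_log (hroot0 l hl), hexpL l hl]
    set Z : Matrix (Fin k) (Fin k) ℂ := aeval Cc (C l⁻¹ * X - 1) with hZ
    have hNZE : N l = Z * E l := by
      rw [show N l = aeval Cc ((C l⁻¹ * X - 1) * qE l) from rfl, map_mul]
    have hZE : Z * E l = E l * Z := (hcomm _ _).symm
    have hEN : E l * N l = N l := by
      rw [hNZE, ← mul_assoc, ← hZE, mul_assoc, hidem l hl]
    have hZval : Z = l⁻¹ • Cc - 1 := by
      rw [hZ, map_sub, map_mul, aeval_C, aeval_X, map_one, ← Algebra.smul_def]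
    have hlN : l • N l = Cc * E l - l • E l := by
      rw [hNZE, hZval, ← smul_mul_assoc, smul_sub, smul_smul,
        mul_inv_cancel₀ (hroot0 l hl), one_smul, sub_mul, smul_mul_assoc, one_mul]
    have h8 : (1 + (l - 1) • E l) * (1 + N l)
        = 1 + (l - 1) • E l + (N l + (l - 1) • (E l * N l)) := by
      rw [mul_add, mul_one, add_mul, one_mul, smul_mul_assoc]
    rw [h8, hEN, sub_smul, sub_smul, one_smul, one_smul, hlN]
    abel
  have hfinal : ∀ s : Finset ℂ, s ⊆ T →
      exp (∑ l ∈ s, d l) = 1 - (∑ l ∈ s, E l) + Cc * (∑ l ∈ s, E l) := by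
    intro s
    induction s using Finset.cons_induction with
    | empty => intro _; simp
    | cons a s ha ih =>
      intro hs
      have haT : a ∈ T := hs (Finset.mem_cons_self a s)
      have hsT : s ⊆ T := fun x hx => hs (Finset.mem_cons.2 (Or.inr hx))
      simp only [Finset.sum_cons]
      have hcomm2 : Commute (d a) (∑ l ∈ s, d l) :=
        Commute.sum_right _ _ _ fun l hl => hcomm _ _
      rw [Matrix.exp_add_of_commute _ _ hcomm2, hF a haT, ih hsT]
      have hxy : E a * (∑ l ∈ s, E l) = 0 := by
        rw [Finset.mul_sum]
        exact Finset.sum_eq_zero fun l hl =>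
          horth a haT l (hsT hl) (by rintro rfl; exact ha hl)
      have hyx : (∑ l ∈ s, E l) * E a = 0 := by
        rw [Finset.sum_mul]
        exact Finset.sum_eq_zero fun l hl =>
          horth l (hsT hl) a haT (by rintro rfl; exact ha hl)
      have hcx : Commute Cc (E a) := by
        have h9 := hcomm X (qE a)
        rwa [aeval_X] at h9
      have hcy : Commute Cc (∑ l ∈ s, E l) :=
        Commute.sum_right _ _ _ fun l hl => by
          have h9 := hcomm X (qE l)
          rwa [aeval_X] at h9
      exact block_mul hxy hyx hcx hcy
  refine ⟨∑ l ∈ T, qD l, ?_⟩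
  rw [map_sum]
  have h10 := hfinal T (subset_refl T)
  rw [hsum] at h10
  rw [show (∑ l ∈ T, aeval Cc (qD l)) = ∑ l ∈ T, d l from rfl, h10]
  simp

open NormedSpace in
/-- For an invertible real `n × n` matrix `A`, there is a real matrix `B`
with `A = exp B` if and only if there is a real matrix `C` with `A = C ^ 2`. -/
theorem real_matrix_log_iff_square (n : ℕ) (A : Matrix (Fin n) (Fin n) ℝ) (hA : IsUnit A) :
    (∃ B : Matrix (Fin n) (Fin n) ℝ, NormedSpace.exp B = A) ↔
      (∃ C : Matrix (Fin n) (Fin n) ℝ, C ^ 2 = A) := by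
  constructor
  · rintro ⟨B, rfl⟩
    refine ⟨NormedSpace.exp ((2⁻¹ : ℝ) • B), ?_⟩
    rw [← Matrix.exp_nsmul 2]
    congr 1
    rw [← Nat.cast_smul_eq_nsmul ℝ 2, smul_smul]
    norm_num
  · rintro ⟨c, rfl⟩
    letI : NormedRing (Matrix (Fin n) (Fin n) ℝ) := Matrix.linftyOpNormedRing
    letI : NormedAlgebra ℝ (Matrix (Fin n) (Fin n) ℝ) := Matrix.linftyOpNormedAlgebra
    letI : NormedRing (Matrix (Fin n) (Fin n) ℂ) := Matrix.linftyOpNormedRing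
    letI : NormedAlgebra ℝ (Matrix (Fin n) (Fin n) ℂ) := Matrix.linftyOpNormedAlgebra
    haveI : FiniteDimensional ℝ (Matrix (Fin n) (Fin n) ℝ) := Module.Finite.matrix
    set Φ : Matrix (Fin n) (Fin n) ℝ →ₐ[ℝ] Matrix (Fin n) (Fin n) ℂ :=
      Complex.ofRealAm.mapMatrix with hΦ
    have hΦapp : ∀ (M : Matrix (Fin n) (Fin n) ℝ) (i j : Fin n), Φ M i j = (M i j : ℂ) := by
      intro M i j
      simp [hΦ, AlgHom.mapMatrix_apply, Matrix.map_apply]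
    have hdet : IsUnit (c.det) := by
      have h1 : IsUnit ((c ^ 2).det) := (Matrix.isUnit_iff_isUnit_det _).1 hA
      rw [pow_two, Matrix.det_mul] at h1
      exact isUnit_of_mul_isUnit_left h1
    have hCc : IsUnit (Φ c) := by
      rw [Matrix.isUnit_iff_isUnit_det]
      have h2 : (Φ c).det = ((c.det : ℂ)) := by
        rw [show Φ c = Complex.ofRealHom.mapMatrix c from rfl, ← RingHom.map_det]
        rfl
      rw [h2, isUnit_iff_ne_zero]
      exact_mod_cast hdet.ne_zero
    obtain ⟨q, hq⟩ := exists_complex_log (Φ c) hCc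
    set D : Matrix (Fin n) (Fin n) ℂ := Polynomial.aeval (Φ c) q with hD
    set D' : Matrix (Fin n) (Fin n) ℂ := (D.conjTranspose).transpose with hD'
    have hD'app : ∀ i j, D' i j = star (D i j) := by
      intro i j
      rw [hD', Matrix.transpose_apply, Matrix.conjTranspose_apply]
    have hΦc_star : ∀ i j, star (Φ c i j) = Φ c i j := by
      intro i j
      rw [hΦapp]
      exact Complex.conj_ofReal _
    have hD'exp : exp D' = Φ c := by
      rw [hD', Matrix.exp_transpose, Matrix.exp_conjTranspose, hq]
      ext i j
      rw [Matrix.transpose_apply, Matrix.conjTranspose_apply]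
      exact hΦc_star i j
    have hD'poly : D' = Polynomial.aeval (Φ c) (q.map (starRingEnd ℂ)) := by
      set σ : Matrix (Fin n) (Fin n) ℂ →+* Matrix (Fin n) (Fin n) ℂ :=
        (starRingEnd ℂ).mapMatrix with hσ
      have h3 : σ (Φ c) = Φ c := by
        ext i j
        simp only [hσ, RingHom.mapMatrix_apply, Matrix.map_apply]
        exact hΦc_star i j
      have h4 : σ.comp (algebraMap ℂ (Matrix (Fin n) (Fin n) ℂ))
          = (algebraMap ℂ (Matrix (Fin n) (Fin n) ℂ)).comp (starRingEnd ℂ) := by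
        refine RingHom.ext fun z => ?_
        ext i j
        simp [hσ, RingHom.mapMatrix_apply, Matrix.map_apply, Matrix.algebraMap_matrix_apply,
          apply_ite (starRingEnd ℂ)]
      have h5 : D' = σ D := by
        ext i j
        rw [hD'app]
        simp only [hσ, RingHom.mapMatrix_apply, Matrix.map_apply]
        rfl
      rw [h5, hD, Polynomial.aeval_def, Polynomial.hom_eval₂, h3, h4,
        ← Polynomial.eval₂_map, ← Polynomial.aeval_def]
    have hcommDD' : Commute D D' := by
      rw [hD'poly, hD]
      show _ * _ = _ * _
      rw [← map_mul, ← map_mul, mul_comm]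
    have hexp2 : exp (D + D') = Φ c * Φ c := by
      rw [Matrix.exp_add_of_commute _ _ hcommDD', hq, hD'exp]
    set B : Matrix (Fin n) (Fin n) ℝ := Matrix.of (fun i j => 2 * (D i j).re) with hB
    have hΦB : Φ B = D + D' := by
      ext i j
      rw [Matrix.add_apply, hD'app, hΦapp]
      simp only [hB, Matrix.of_apply]
      exact (Complex.add_conj _).symm
    have hcont : Continuous Φ := Φ.toLinearMap.continuous_of_finiteDimensional
    letI : NormedAlgebra ℚ (Matrix (Fin n) (Fin n) ℝ) := NormedAlgebra.restrictScalars ℚ ℝ _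
    have hfin : Φ (exp B) = Φ (c ^ 2) := by
      erw [map_exp Φ hcont, hΦB, hexp2]
      rw [pow_two, map_mul]
    have hinj : Function.Injective Φ := by
      intro M M' hMM
      ext i j
      have h6 := congrArg (fun X : Matrix (Fin n) (Fin n) ℂ => X i j) hMM
      simp only [hΦapp] at h6
      exact_mod_cast h6
    exact ⟨B, hinj hfin⟩
end

section
/- If the time scale 𝕋 is syndetic, i.e. M := sup{μ(t) : t ∈ 𝕋} < ∞, then liminf_{t→+∞} s(t)/t > 0 (indeed s(t) ≥ (log(1+M)/M)·t for all t ≥ 0 when M > 0, and s(t) = t when M = 0). -/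
open Set Filter

noncomputable section

/-- A time scale: a closed unbounded subset of `[0,∞)` containing `0`. -/
def IsTimeScale (T : Set ℝ) : Prop :=
  IsClosed T ∧ T ⊆ Ici 0 ∧ ¬ BddAbove T ∧ (0 : ℝ) ∈ T

/-- The forward jump operator `σ(t) = inf {τ ∈ T | τ > t}`. -/
def tsSigma (T : Set ℝ) (t : ℝ) : ℝ := sInf {τ ∈ T | t < τ}

/-- The graininess `μ(t) = σ(t) − t`. -/
def tsMu (T : Set ℝ) (t : ℝ) : ℝ := tsSigma T t - t

/-- `[t]_T = sup {τ ∈ T | τ ≤ t}`. -/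
def tsFloor (T : Set ℝ) (t : ℝ) : ℝ := sSup {τ ∈ T | τ ≤ t}

/-- The integrand of the time transformation. -/
def tsG (T : Set ℝ) (τ : ℝ) : ℝ :=
  if 0 < tsMu T (tsFloor T τ) then
    Real.log (1 + tsMu T (tsFloor T τ)) / tsMu T (tsFloor T τ)
  else 1

/-- The time transformation `s(t) = ∫₀ᵗ g(τ) dτ`. -/
def tsS (T : Set ℝ) (t : ℝ) : ℝ := ∫ τ in (0:ℝ)..t, tsG T τ

/-- `f` has Δ-derivative `γ` at `t ∈ T`. -/
def HasDeltaDerivAt {E : Type*} [NormedAddCommGroup E] [NormedSpace ℝ E]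
    (T : Set ℝ) (f : ℝ → E) (γ : E) (t : ℝ) : Prop :=
  ∀ ε > 0, ∃ δ > 0, ∀ u ∈ T, |u - t| < δ →
    ‖(f (tsSigma T t) - f u) - (tsSigma T t - u) • γ‖ ≤ ε * |tsSigma T t - u|

/-- rd-continuity on the time scale `T`: continuity at right-dense points and
left-continuity at left-dense points. -/
def RdContinuousOn {E : Type*} [TopologicalSpace E] (T : Set ℝ) (f : ℝ → E) : Prop :=
  (∀ t ∈ T, tsMu T t = 0 → ContinuousWithinAt f T t) ∧
  (∀ t ∈ T, t ∈ closure (T ∩ Iio t) → ContinuousWithinAt f (T ∩ Iio t) t)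

/-- The action of an `n × n` real matrix on Euclidean space. -/
def mulE {n : ℕ} (M : Matrix (Fin n) (Fin n) ℝ) (x : EuclideanSpace ℝ (Fin n)) :
    EuclideanSpace ℝ (Fin n) := Matrix.toEuclideanLin M x

/-- `Φ` is the fundamental matrix of the linear ODE `ẋ = A(t)x` on `[0,∞)`. -/
def IsFundamentalOn (n : ℕ) (A Φ : ℝ → Matrix (Fin n) (Fin n) ℝ) : Prop :=
  Φ 0 = 1 ∧ ∀ t ∈ Ici (0:ℝ), ∀ x₀ : EuclideanSpace ℝ (Fin n),
    HasDerivWithinAt (fun τ => mulE (Φ τ) x₀) (mulE (A t) (mulE (Φ t) x₀)) (Ici 0) t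

/-- Hyperbolicity (exponential dichotomy) of `ẋ = A(t)x` on `[0,∞)`, expressed through the
fundamental matrix `Φ`, with stable/unstable families `U`, `V` and constants `C`, `lam`. -/
def IsHyperbolicWith (n : ℕ) (Φ : ℝ → Matrix (Fin n) (Fin n) ℝ)
    (U V : ℝ → Submodule ℝ (EuclideanSpace ℝ (Fin n))) (C lam : ℝ) : Prop :=
  0 < C ∧ 0 < lam ∧
  (∀ t ∈ Ici (0:ℝ), IsCompl (U t) (V t)) ∧
  (∀ t ∈ Ici (0:ℝ), ∀ τ ∈ Ici (0:ℝ),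
    (U τ).map (Matrix.toEuclideanLin (Φ t * (Φ τ)⁻¹)) = U t ∧
    (V τ).map (Matrix.toEuclideanLin (Φ t * (Φ τ)⁻¹)) = V t) ∧
  (∀ τ ∈ Ici (0:ℝ), ∀ t, τ ≤ t → ∀ x₀ ∈ U τ,
    ‖mulE (Φ t * (Φ τ)⁻¹) x₀‖ ≤ C * Real.exp (-lam * (t - τ)) * ‖x₀‖) ∧
  (∀ τ ∈ Ici (0:ℝ), ∀ t ∈ Ici (0:ℝ), t ≤ τ → ∀ x₀ ∈ V τ,
    ‖mulE (Φ t * (Φ τ)⁻¹) x₀‖ ≤ C * Real.exp (lam * (t - τ)) * ‖x₀‖)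

/-- Hyperbolicity of `ẋ = A(t)x`, with the dichotomy data quantified existentially. -/
def IsHyperbolic (n : ℕ) (Φ : ℝ → Matrix (Fin n) (Fin n) ℝ) : Prop :=
  ∃ U V C lam, IsHyperbolicWith n Φ U V C lam

/-- `Ψ` is the fundamental Δ-matrix of `x^Δ = 𝐀(t)x` on the time scale `T`. -/
def IsDeltaFundamental {n : ℕ} (T : Set ℝ) (A Ψ : ℝ → Matrix (Fin n) (Fin n) ℝ) : Prop :=
  Ψ 0 = 1 ∧ ∀ t ∈ T, ∀ x₀ : EuclideanSpace ℝ (Fin n),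
    HasDeltaDerivAt T (fun τ => mulE (Ψ τ) x₀) (mulE (A t) (mulE (Ψ t) x₀)) t

/-- `𝐀` is uniformly regressive on `T`. -/
def UniformlyRegressive {n : ℕ} (T : Set ℝ) (A : ℝ → Matrix (Fin n) (Fin n) ℝ) : Prop :=
  (∀ t ∈ T, IsUnit (1 + tsMu T t • A t)) ∧
  ∃ M : ℝ, ∀ t ∈ T, ∀ x : EuclideanSpace ℝ (Fin n),
    ‖mulE (1 + tsMu T t • A t)⁻¹ x‖ ≤ M * ‖x‖

end


section AuxTS

variable {T : Set ℝ}

private lemma ts_exists_gt (hub : ¬ BddAbove T) (t : ℝ) : ∃ τ ∈ T, t < τ := by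
  rcases not_bddAbove_iff.1 hub t with ⟨τ, hτ, ht⟩
  exact ⟨τ, hτ, ht⟩

private lemma tsSigma_ge (hub : ¬ BddAbove T) (t : ℝ) : t ≤ tsSigma T t := by
  rcases ts_exists_gt hub t with ⟨τ, hτ, ht⟩
  exact le_csInf ⟨τ, hτ, ht⟩ (fun x hx => hx.2.le)

private lemma tsMu_nonneg (hub : ¬ BddAbove T) (t : ℝ) : 0 ≤ tsMu T t :=
  sub_nonneg.2 (tsSigma_ge hub t)

private lemma tsSigma_mono (hub : ¬ BddAbove T) : Monotone (tsSigma T) := by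
  intro a b hab
  rcases ts_exists_gt hub b with ⟨τ, hτ, ht⟩
  exact csInf_le_csInf ⟨a, fun x hx => hx.2.le⟩ ⟨τ, hτ, ht⟩
    (fun x hx => ⟨hx.1, lt_of_le_of_lt hab hx.2⟩)

private lemma tsFloor_mono (hpos : T ⊆ Ici 0) : Monotone (tsFloor T) := by
  intro a b hab
  by_cases ha : ({τ ∈ T | τ ≤ a} : Set ℝ).Nonempty
  · exact csSup_le_csSup ⟨b, fun x hx => hx.2⟩ ha (fun x hx => ⟨hx.1, hx.2.trans hab⟩)
  · rw [tsFloor, Set.not_nonempty_iff_eq_empty.1 ha, Real.sSup_empty]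
    by_cases hb : ({τ ∈ T | τ ≤ b} : Set ℝ).Nonempty
    · rcases hb with ⟨x, hx⟩
      exact le_trans (hpos hx.1) (le_csSup ⟨b, fun y hy => hy.2⟩ hx)
    · rw [tsFloor, Set.not_nonempty_iff_eq_empty.1 hb, Real.sSup_empty]

private lemma tsFloor_mem (hcl : IsClosed T) (h0 : (0:ℝ) ∈ T) {t : ℝ} (ht : 0 ≤ t) :
    tsFloor T t ∈ T := by
  have h : ({τ ∈ T | τ ≤ t} : Set ℝ) = T ∩ Iic t := rfl
  have : tsFloor T t ∈ T ∩ Iic t := by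
    rw [tsFloor, h]
    exact (hcl.inter isClosed_Iic).csSup_mem ⟨0, h0, ht⟩ ⟨t, fun x hx => hx.2⟩
  exact this.1

private lemma tsG_measurable (hpos : T ⊆ Ici 0) (hub : ¬ BddAbove T) :
    Measurable (tsG T) := by
  have h1 : Measurable (tsFloor T) := (tsFloor_mono hpos).measurable
  have h2 : Measurable (tsSigma T) := (tsSigma_mono hub).measurable
  have hmu : Measurable (fun τ => tsMu T (tsFloor T τ)) := (h2.comp h1).sub h1
  unfold tsG
  exact Measurable.ite (measurableSet_lt measurable_const hmu)
    ((Real.measurable_log.comp (measurable_const.add hmu)).div hmu) measurable_const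

private lemma tsG_nonneg (τ : ℝ) : 0 ≤ tsG T τ := by
  unfold tsG
  split_ifs with h
  · exact div_nonneg (Real.log_nonneg (by linarith)) h.le
  · exact zero_le_one

private lemma tsG_le_one (τ : ℝ) : tsG T τ ≤ 1 := by
  unfold tsG
  split_ifs with h
  · rw [div_le_one h]
    have := Real.log_le_sub_one_of_pos (show (0:ℝ) < 1 + tsMu T (tsFloor T τ) by linarith)
    linarith
  · exact le_refl 1

private lemma tsG_intervalIntegrable (hpos : T ⊆ Ici 0) (hub : ¬ BddAbove T) (t : ℝ) :
    IntervalIntegrable (tsG T) MeasureTheory.volume 0 t := by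
  rw [intervalIntegrable_iff]
  apply MeasureTheory.Integrable.mono' (g := fun _ => (1:ℝ))
    (MeasureTheory.integrableOn_const (C := (1:ℝ)) measure_Ioc_lt_top.ne (by simp))
    ((tsG_measurable hpos hub).aestronglyMeasurable.restrict)
  filter_upwards with x
  rw [Real.norm_eq_abs, abs_of_nonneg (tsG_nonneg x)]
  exact tsG_le_one x

private lemma ts_log_div_le {M m : ℝ} (hM : (0:ℝ) < M) (hm : 0 < m) (hmM : m ≤ M) :
    Real.log (1 + M) / M ≤ Real.log (1 + m) / m := by
  have h := strictConcaveOn_log_Ioi.concaveOn.2 (x := 1) (y := 1 + M)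
    (mem_Ioi.2 one_pos) (mem_Ioi.2 (by linarith))
    (show (0:ℝ) ≤ 1 - m / M by rw [sub_nonneg]; exact div_le_one_of_le₀ hmM hM.le)
    (show (0:ℝ) ≤ m / M from div_nonneg hm.le hM.le)
    (show (1 - m / M) + m / M = 1 by ring)
  have hx : (1 - m / M) • (1:ℝ) + (m / M) • (1 + M) = 1 + m := by
    simp only [smul_eq_mul]; rw [mul_add, div_mul_cancel₀ m hM.ne']; ring
  rw [hx] at h
  simp only [smul_eq_mul, Real.log_one, mul_zero, zero_add] at h
  rw [div_le_div_iff₀ hM hm]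
  calc Real.log (1 + M) * m = m * Real.log (1+M) := mul_comm _ _
    _ = (m / M * Real.log (1 + M)) * M := by field_simp
    _ ≤ Real.log (1 + m) * M := by
        nlinarith [Real.log_nonneg (by linarith : (1:ℝ) ≤ 1 + m)]

end AuxTS

/-- Lemma 4.1, third part. If the time scale `T` is syndetic, i.e.
`M := sup {μ(t) : t ∈ T} < ∞`, then `liminf_{t → ∞} s(t)/t > 0`; indeed
`s(t) ≥ (log(1+M)/M) · t` for `t ≥ 0` when `M > 0`, and `s(t) = t` when `M = 0`. -/
theorem tsS_liminf_pos_of_syndetic (T : Set ℝ) (hT : IsTimeScale T)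
    (hsyn : BddAbove (tsMu T '' T)) :
    0 < Filter.liminf (fun t => tsS T t / t) Filter.atTop ∧
    (0 < sSup (tsMu T '' T) →
      ∀ t ≥ (0:ℝ), Real.log (1 + sSup (tsMu T '' T)) / sSup (tsMu T '' T) * t ≤ tsS T t) ∧
    (sSup (tsMu T '' T) = 0 → ∀ t ≥ (0:ℝ), tsS T t = t) := by
  obtain ⟨hcl, hpos, hub, h0⟩ := hT
  set M := sSup (tsMu T '' T) with hMdef
  have hM0 : 0 ≤ M := le_trans (tsMu_nonneg hub 0) (le_csSup hsyn ⟨0, h0, rfl⟩)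
  have hmu_le : ∀ t ∈ T, tsMu T t ≤ M := fun t ht => le_csSup hsyn ⟨t, ht, rfl⟩
  have hupper : ∀ t ≥ (0:ℝ), tsS T t ≤ t := by
    intro t ht
    have := intervalIntegral.integral_mono_on (μ := MeasureTheory.volume) ht
      (tsG_intervalIntegrable hpos hub t) intervalIntegrable_const
      (fun x _ => tsG_le_one (T := T) x)
    simpa [tsS] using this
  rcases eq_or_lt_of_le hM0 with hM | hM
  · -- M = 0
    have hs_eq : ∀ t ≥ (0:ℝ), tsS T t = t := by
      intro t ht
      have hEq : EqOn (tsG T) (fun _ => (1:ℝ)) (uIcc 0 t) := by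
        intro x hx
        rw [uIcc_of_le ht] at hx
        have hfl := tsFloor_mem hcl h0 hx.1
        have h1 : tsMu T (tsFloor T x) ≤ 0 := hM ▸ hmu_le _ hfl
        simp only [tsG, if_neg (not_lt.2 h1)]
      rw [tsS, intervalIntegral.integral_congr hEq]
      simp
    refine ⟨?_, fun h => absurd hM (ne_of_lt h), fun _ t ht => hs_eq t ht⟩
    · have hev : ∀ᶠ t in atTop, (1:ℝ) ≤ tsS T t / t := by
        filter_upwards [eventually_ge_atTop (1:ℝ)] with t ht
        have ht0 : (0:ℝ) < t := lt_of_lt_of_le one_pos ht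
        rw [hs_eq t ht0.le, div_self ht0.ne']
      have hev2 : ∀ᶠ t in atTop, tsS T t / t ≤ 1 := by
        filter_upwards [eventually_ge_atTop (1:ℝ)] with t ht
        have ht0 : (0:ℝ) < t := lt_of_lt_of_le one_pos ht
        rw [hs_eq t ht0.le, div_self ht0.ne']
      exact lt_of_lt_of_le one_pos
        (le_liminf_of_le (isCoboundedUnder_ge_of_eventually_le _ hev2) hev)
  · -- 0 < M
    set c := Real.log (1 + M) / M with hc
    have hc0 : 0 < c := div_pos (Real.log_pos (by linarith)) hM
    have glower : ∀ τ : ℝ, 0 ≤ τ → c ≤ tsG T τ := by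
      intro τ hτ
      have hfl := tsFloor_mem hcl h0 hτ
      have hmle : tsMu T (tsFloor T τ) ≤ M := hmu_le _ hfl
      unfold tsG
      split_ifs with h
      · exact ts_log_div_le hM h hmle
      · rw [hc, div_le_one hM]
        have := Real.log_le_sub_one_of_pos (show (0:ℝ) < 1 + M by linarith)
        linarith
    have key : ∀ t ≥ (0:ℝ), c * t ≤ tsS T t := by
      intro t ht
      have := intervalIntegral.integral_mono_on (μ := MeasureTheory.volume) ht
        intervalIntegrable_const (tsG_intervalIntegrable hpos hub t)
        (fun x hx => glower x hx.1)
      rw [intervalIntegral.integral_const] at this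
      have h2 : c * t = (t - 0) • c := by rw [smul_eq_mul]; ring
      rw [tsS, h2]
      exact this
    refine ⟨?_, fun _ t ht => key t ht, fun h => absurd h (by linarith)⟩
    have hev : ∀ᶠ t in atTop, c ≤ tsS T t / t := by
      filter_upwards [eventually_ge_atTop (1:ℝ)] with t ht
      have ht0 : (0:ℝ) < t := lt_of_lt_of_le one_pos ht
      rw [le_div_iff₀ ht0]
      exact key t ht0.le
    have hev2 : ∀ᶠ t in atTop, tsS T t / t ≤ 1 := by
      filter_upwards [eventually_ge_atTop (1:ℝ)] with t ht
      have ht0 : (0:ℝ) < t := lt_of_lt_of_le one_pos ht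
      rw [div_le_one ht0]
      exact hupper t ht0.le
    exact lt_of_lt_of_le hc0
      (le_liminf_of_le (isCoboundedUnder_ge_of_eventually_le _ hev2) hev)
end

section
/- Let A : [0,∞) → M_n(ℝ) be bounded and continuous, and suppose the linear system ẋ = A(t)x is hyperbolic. Then for every bounded continuous f : [0,∞) → ℝⁿ there exists a bounded (C¹) solution φ : [0,∞) → ℝⁿ of φ'(t) = A(t)φ(t) + f(t). -/
open Set Filter

namespace HypAux
open Set Matrix MeasureTheory

variable {n : ℕ}

lemma mulE_def (M : Matrix (Fin n) (Fin n) ℝ) (x : EuclideanSpace ℝ (Fin n)) :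
    mulE M x = Matrix.toEuclideanCLM (𝕜 := ℝ) M x := rfl

lemma mulE_mulE (M N : Matrix (Fin n) (Fin n) ℝ) (x : EuclideanSpace ℝ (Fin n)) :
    mulE (M * N) x = mulE M (mulE N x) := by
  rw [mulE_def, mulE_def, mulE_def, _root_.map_mul]; rfl

lemma mulE_one (x : EuclideanSpace ℝ (Fin n)) : mulE 1 x = x := by
  rw [mulE_def, _root_.map_one]; rfl

lemma mulE_sub (M : Matrix (Fin n) (Fin n) ℝ) (x y : EuclideanSpace ℝ (Fin n)) :
    mulE M (x - y) = mulE M x - mulE M y :=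
  map_sub (Matrix.toEuclideanCLM (𝕜 := ℝ) M) x y

lemma _root_.Continuous.mulE' {n : ℕ} {X : Type*} [TopologicalSpace X]
    {P : X → Matrix (Fin n) (Fin n) ℝ} {q : X → EuclideanSpace ℝ (Fin n)}
    (hP : Continuous P) (hq : Continuous q) : Continuous fun τ => mulE (P τ) (q τ) := by
  have h1 : Continuous (fun M : Matrix (Fin n) (Fin n) ℝ =>
      Matrix.toEuclideanCLM (𝕜 := ℝ) M) :=
    LinearMap.continuous_of_finiteDimensional
      { toFun := fun M => Matrix.toEuclideanCLM (𝕜 := ℝ) M,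
        map_add' := fun a b => map_add _ a b,
        map_smul' := fun c a => map_smul _ c a }
  exact (h1.comp hP).clm_apply hq

lemma euclidean_sum_repr (x : EuclideanSpace ℝ (Fin n)) :
    x = ∑ j, x j • EuclideanSpace.single j (1:ℝ) := by
  have := (EuclideanSpace.basisFun (Fin n) ℝ).toBasis.sum_repr x
  simp only [OrthonormalBasis.coe_toBasis_repr_apply, EuclideanSpace.basisFun_repr,
    OrthonormalBasis.coe_toBasis, EuclideanSpace.basisFun_apply] at this
  exact this.symm

lemma mulE_sum_repr (M : Matrix (Fin n) (Fin n) ℝ) (x : EuclideanSpace ℝ (Fin n)) :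
    mulE M x = ∑ j, x j • mulE M (EuclideanSpace.single j (1:ℝ)) := by
  conv_lhs => rw [euclidean_sum_repr x]
  rw [mulE_def, map_sum]
  refine Finset.sum_congr rfl fun j _ => ?_
  rw [_root_.map_smul]; rfl

end HypAux
open HypAux Matrix MeasureTheory in
set_option maxHeartbeats 1000000 in
/-- If `A : [0,∞) → M_n(ℝ)` is bounded and continuous and `ẋ = A(t)x` is
hyperbolic, then for every bounded continuous `f : [0,∞) → ℝⁿ` the system
`ẋ = A(t)x + f(t)` has a bounded solution on `[0,∞)`. -/
theorem hyperbolic_implies_bounded_solution (n : ℕ)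
    (A Φ : ℝ → Matrix (Fin n) (Fin n) ℝ)
    (hAc : ContinuousOn A (Ici 0))
    (hAb : ∃ M : ℝ, ∀ t ∈ Ici (0:ℝ), ∀ x : EuclideanSpace ℝ (Fin n),
      ‖mulE (A t) x‖ ≤ M * ‖x‖)
    (hΦ : IsFundamentalOn n A Φ)
    (hhyp : IsHyperbolic n Φ) :
    ∀ f : ℝ → EuclideanSpace ℝ (Fin n), ContinuousOn f (Ici 0) →
      (∃ M : ℝ, ∀ t ∈ Ici (0:ℝ), ‖f t‖ ≤ M) →
      ∃ φ : ℝ → EuclideanSpace ℝ (Fin n),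
        (∀ t ∈ Ici (0:ℝ), HasDerivWithinAt φ (mulE (A t) (φ t) + f t) (Ici 0) t) ∧
        ∃ M : ℝ, ∀ t ∈ Ici (0:ℝ), ‖φ t‖ ≤ M := by
  intro f hfc hfb
  rcases Nat.eq_zero_or_pos n with hn | hn
  · -- trivial case `n = 0`
    subst hn
    haveI : Subsingleton (EuclideanSpace ℝ (Fin 0)) :=
      ⟨fun a b => PiLp.ext fun i => i.elim0⟩
    refine ⟨fun _ => 0, fun t ht => ?_, 0, fun t ht => by simp⟩
    have h0 : (mulE (A t) (0 : EuclideanSpace ℝ (Fin 0)) + f t) = 0 := Subsingleton.elim _ _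
    rw [h0]
    exact hasDerivWithinAt_const t (Ici (0:ℝ)) (0 : EuclideanSpace ℝ (Fin 0))
  obtain ⟨U, V, C, lam, hC, hlam, hcompl, hinvUV, hU, hV⟩ := hhyp
  obtain ⟨hΦ0, hΦd⟩ := hΦ
  obtain ⟨MA, hMA⟩ := hAb
  obtain ⟨Mf, hMf⟩ := hfb
  have h00 : (0:ℝ) ∈ Ici (0:ℝ) := Set.self_mem_Ici
  have hMf0 : 0 ≤ Mf := le_trans (norm_nonneg _) (hMf 0 h00)
  -- a nonzero vector
  have hx0 : ∃ x : EuclideanSpace ℝ (Fin n), x ≠ 0 := by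
    refine ⟨EuclideanSpace.single ⟨0, hn⟩ (1:ℝ), fun h => one_ne_zero (α := ℝ) ?_⟩
    have := congrFun (congrArg (fun v : EuclideanSpace ℝ (Fin n) => (v : Fin n → ℝ)) h) ⟨0, hn⟩
    simpa [EuclideanSpace.single_apply] using this
  -- all `Φ τ`, `τ ≥ 0`, are invertible
  have hdet : ∀ τ ∈ Ici (0:ℝ), IsUnit (Φ τ).det := by
    intro τ hτ
    by_contra hτd
    have h0 : (Φ τ)⁻¹ = 0 := Matrix.nonsing_inv_apply_not_isUnit _ hτd
    have h1 := (hinvUV 0 h00 τ hτ).1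
    have h2 := (hinvUV 0 h00 τ hτ).2
    rw [h0, Matrix.mul_zero] at h1 h2
    rw [_root_.map_zero, Submodule.map_zero] at h1 h2
    have hc := (hcompl 0 h00).sup_eq_top
    rw [← h1, ← h2, sup_idem] at hc
    obtain ⟨x, hx⟩ := hx0
    exact hx (Submodule.mem_bot (R := ℝ) |>.1 (hc ▸ Submodule.mem_top))
  have hPhiInvL : ∀ τ ∈ Ici (0:ℝ), ∀ x, mulE (Φ τ)⁻¹ (mulE (Φ τ) x) = x := by
    intro τ hτ x
    rw [← mulE_mulE, Matrix.nonsing_inv_mul _ (hdet τ hτ), mulE_one]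
  have hPhiInvR : ∀ τ ∈ Ici (0:ℝ), ∀ x, mulE (Φ τ) (mulE (Φ τ)⁻¹ x) = x := by
    intro τ hτ x
    rw [← mulE_mulE, Matrix.mul_nonsing_inv _ (hdet τ hτ), mulE_one]
  -- matrix products collapse
  have hProd : ∀ s ∈ Ici (0:ℝ), ∀ t ∈ Ici (0:ℝ),
      (Φ s * (Φ t)⁻¹) * (Φ t * (Φ s)⁻¹) = 1 := by
    intro s hs t ht
    calc (Φ s * (Φ t)⁻¹) * (Φ t * (Φ s)⁻¹)
        = Φ s * ((Φ t)⁻¹ * Φ t) * (Φ s)⁻¹ := by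
          rw [Matrix.mul_assoc, Matrix.mul_assoc, Matrix.mul_assoc]
      _ = 1 := by
          rw [Matrix.nonsing_inv_mul _ (hdet t ht), Matrix.mul_one,
            Matrix.mul_nonsing_inv _ (hdet s hs)]
  -- continuity of `Φ` on `[0,∞)`
  have hcolCont : ∀ x₀, ContinuousOn (fun τ => mulE (Φ τ) x₀) (Ici 0) :=
    fun x₀ τ hτ => (hΦd τ hτ x₀).continuousWithinAt
  have hΦcont : ContinuousOn Φ (Ici 0) := by
    apply continuousOn_pi.2
    intro i
    apply continuousOn_pi.2
    intro j
    have : (fun τ => Φ τ i j)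
        = fun τ => EuclideanSpace.proj (𝕜 := ℝ) i (mulE (Φ τ) (EuclideanSpace.single j 1)) := by
      funext τ
      show Φ τ i j = mulE (Φ τ) (EuclideanSpace.single j (1:ℝ)) i
      rw [mulE, Matrix.toEuclideanLin_apply]
      show Φ τ i j = ((Φ τ) *ᵥ (WithLp.equiv 2 (Fin n → ℝ)) (EuclideanSpace.single j (1:ℝ))) i
      simp
    rw [this]
    exact (EuclideanSpace.proj (𝕜 := ℝ) i).continuous.comp_continuousOn (hcolCont _)
  -- Grönwall estimate for the forward evolution
  have hgron : ∀ s ∈ Ici (0:ℝ), ∀ t, s ≤ t → ∀ x : EuclideanSpace ℝ (Fin n),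
      ‖mulE (Φ t * (Φ s)⁻¹) x‖ ≤ Real.exp (MA * (t - s)) * ‖x‖ := by
    intro s hs t hst x
    set y : ℝ → EuclideanSpace ℝ (Fin n) := fun σ => mulE (Φ σ) (mulE (Φ s)⁻¹ x) with hy
    have hys : y s = x := hPhiInvR s hs x
    have hIccsub : Icc s t ⊆ Ici (0:ℝ) := fun σ hσ => le_trans hs hσ.1
    have hcont : ContinuousOn y (Icc s t) := fun σ hσ =>
      ((hΦd σ (hIccsub hσ) _).continuousWithinAt).mono hIccsub
    have hderiv : ∀ σ ∈ Ico s t, HasDerivWithinAt y (mulE (A σ) (y σ)) (Ici σ) σ :=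
      fun σ hσ => (hΦd σ (le_trans hs hσ.1) _).mono (Ici_subset_Ici.2 (le_trans hs hσ.1))
    have hbnd : ∀ σ ∈ Ico s t, ‖mulE (A σ) (y σ)‖ ≤ MA * ‖y σ‖ + 0 := fun σ hσ => by
      rw [add_zero]; exact hMA σ (le_trans hs hσ.1) (y σ)
    have key := norm_le_gronwallBound_of_norm_deriv_right_le hcont hderiv
      (le_of_eq (congrArg norm hys)) hbnd t (right_mem_Icc.2 hst)
    rw [gronwallBound_ε0] at key
    calc ‖mulE (Φ t * (Φ s)⁻¹) x‖ = ‖y t‖ := by rw [hy, mulE_mulE]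
      _ ≤ ‖x‖ * Real.exp (MA * (t - s)) := key
      _ = Real.exp (MA * (t - s)) * ‖x‖ := mul_comm _ _
  -- continuous extensions to all of `ℝ`
  set m0 : ℝ → ℝ := fun τ => max τ 0 with hm0
  have hm0c : Continuous m0 := continuous_id.max continuous_const
  have hm0mem : ∀ τ, m0 τ ∈ Ici (0:ℝ) := fun τ => le_max_right τ 0
  have hΦhatc : Continuous (fun τ => Φ (m0 τ)) := hΦcont.comp_continuous hm0c hm0mem
  have hfhatc : Continuous (fun τ => f (m0 τ)) := hfc.comp_continuous hm0c hm0mem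
  have hPsic : Continuous (fun τ => (Φ (m0 τ))⁻¹) := by
    have heq : (fun τ => (Φ (m0 τ))⁻¹)
        = fun τ => ((Φ (m0 τ)).det)⁻¹ • (Φ (m0 τ)).adjugate := by
      funext τ; rw [Matrix.inv_def, Ring.inverse_eq_inv]
    rw [heq]
    exact (hΦhatc.matrix_det.inv₀
      (fun τ => (hdet _ (hm0mem τ)).ne_zero)).smul hΦhatc.matrix_adjugate
  set g : ℝ → EuclideanSpace ℝ (Fin n) := fun τ => mulE (Φ (m0 τ))⁻¹ (f (m0 τ)) with hgdef
  have hgc : Continuous g := hPsic.mulE' hfhatc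
  have hm0id : ∀ s ∈ Ici (0:ℝ), m0 s = s := fun s hs => max_eq_left hs
  have hgval : ∀ s ∈ Ici (0:ℝ), g s = mulE (Φ s)⁻¹ (f s) := by
    intro s hs; rw [hgdef]; simp only [hm0id s hs]
  -- the projection onto `U 0` along `V 0`
  have hc0 := hcompl 0 h00
  set prU : EuclideanSpace ℝ (Fin n) →ₗ[ℝ] EuclideanSpace ℝ (Fin n) :=
    (U 0).subtype ∘ₗ ((U 0).projectionOnto (V 0) hc0) with hprU
  have hprUc : Continuous prU := prU.continuous_of_finiteDimensional
  have hprmemU : ∀ x, prU x ∈ U 0 := fun x =>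
    ((U 0).projectionOnto (V 0) hc0 x).2
  have hprmemV : ∀ x : EuclideanSpace ℝ (Fin n), x - prU x ∈ V 0 := by
    intro x
    have hx : x ∈ U 0 ⊔ V 0 := by rw [hc0.sup_eq_top]; exact Submodule.mem_top
    obtain ⟨u, hu, v, hv, rfl⟩ := Submodule.mem_sup.1 hx
    have : prU (u + v) = u := by
      rw [hprU]
      simp only [LinearMap.coe_comp, Function.comp_apply, Submodule.coe_subtype, map_add]
      rw [Submodule.projectionOnto_apply_left hc0 ⟨u, hu⟩,
        Submodule.projectionOnto_apply_of_mem_right hc0 hv]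
      simp
    rw [this]; simpa using hv
  -- evolved stable/unstable components
  set uv : ℝ → EuclideanSpace ℝ (Fin n) := fun s => mulE (Φ s) (prU (g s)) with huvdef
  set w : ℝ → EuclideanSpace ℝ (Fin n) := fun s => g s - prU (g s) with hwdef
  have hwc : Continuous w := hgc.sub (hprUc.comp hgc)
  have huvmem : ∀ s ∈ Ici (0:ℝ), uv s ∈ U s := by
    intro s hs
    have h1 := (hinvUV s hs 0 h00).1
    rw [hΦ0, inv_one, Matrix.mul_one] at h1
    rw [← h1]
    exact Submodule.mem_map_of_mem (hprmemU (g s))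
  have hfuv : ∀ s ∈ Ici (0:ℝ), f s - uv s = mulE (Φ s) (w s) := by
    intro s hs
    rw [hwdef]
    show f s - uv s = mulE (Φ s) (g s - prU (g s))
    rw [mulE_sub, huvdef]
    show f s - uv s = mulE (Φ s) (g s) - uv s
    rw [hgval s hs, hPhiInvR s hs]
  have hvvmem : ∀ s ∈ Ici (0:ℝ), f s - uv s ∈ V s := by
    intro s hs
    have h1 := (hinvUV s hs 0 h00).2
    rw [hΦ0, inv_one, Matrix.mul_one] at h1
    rw [hfuv s hs, ← h1]
    exact Submodule.mem_map_of_mem (hprmemV (g s))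
  have hwvv : ∀ s ∈ Ici (0:ℝ), w s = mulE (Φ s)⁻¹ (f s - uv s) := by
    intro s hs
    rw [hfuv s hs, hPhiInvL s hs]
  -- the key uniform bound on the splitting
  set Δ : ℝ := Real.log (1 + 2*C) / lam with hΔdef
  have h2C : (1:ℝ) < 1 + 2*C := by linarith
  have hΔ0 : 0 ≤ Δ := div_nonneg (Real.log_nonneg h2C.le) hlam.le
  set r : ℝ := C / (1 + 2*C) with hrdef
  have hrval : C * Real.exp (-lam * Δ) = r := by
    have hexp : Real.exp (-lam * Δ) = (1+2*C)⁻¹ := by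
      rw [hΔdef, show -lam * (Real.log (1+2*C)/lam) = -Real.log (1+2*C) by field_simp]
      rw [Real.exp_neg, Real.exp_log (by linarith)]
    rw [hexp, hrdef, div_eq_mul_inv]
  have hr0 : 0 ≤ r := div_nonneg hC.le (by linarith)
  have hr2 : r ≤ 1/2 := by
    rw [hrdef, div_le_iff₀ (by linarith)]; linarith
  set Kv : ℝ := (4/3 : ℝ) * (r * Real.exp (MA*Δ) + r^2) with hKvdef
  have hKv0 : 0 ≤ Kv := by positivity
  have hvbound : ∀ s ∈ Ici (0:ℝ), ‖f s - uv s‖ ≤ Kv * ‖f s‖ := by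
    intro s hs
    set t : ℝ := s + Δ with htdef
    have hst : s ≤ t := by rw [htdef]; linarith
    have ht0 : t ∈ Ici (0:ℝ) := le_trans hs hst
    have hts : t - s = Δ := by rw [htdef]; ring
    have a1 : ‖mulE (Φ t * (Φ s)⁻¹) (f s)‖ ≤ Real.exp (MA * Δ) * ‖f s‖ := by
      have := hgron s hs t hst (f s); rwa [hts] at this
    have a2 : ‖mulE (Φ t * (Φ s)⁻¹) (uv s)‖ ≤ r * ‖uv s‖ := by
      have h := hU s hs t hst (uv s) (huvmem s hs)
      rw [hts] at h
      calc ‖mulE (Φ t * (Φ s)⁻¹) (uv s)‖ ≤ C * Real.exp (-lam * Δ) * ‖uv s‖ := h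
        _ = r * ‖uv s‖ := by rw [hrval]
    have hv' : mulE (Φ t * (Φ s)⁻¹) (f s - uv s) ∈ V t := by
      have h2 := (hinvUV t ht0 s hs).2
      rw [← h2]
      exact Submodule.mem_map_of_mem (hvvmem s hs)
    have a3 : ‖f s - uv s‖ ≤ r * ‖mulE (Φ t * (Φ s)⁻¹) (f s - uv s)‖ := by
      have h := hV t ht0 s hs hst _ hv'
      have hid : mulE (Φ s * (Φ t)⁻¹) (mulE (Φ t * (Φ s)⁻¹) (f s - uv s)) = f s - uv s := by
        rw [← mulE_mulE, hProd s hs t ht0, mulE_one]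
      rw [hid] at h
      have hst' : lam * (s - t) = -lam * Δ := by rw [← hts]; ring
      rw [hst', hrval] at h
      exact h
    have tineq : ‖mulE (Φ t * (Φ s)⁻¹) (f s - uv s)‖
        ≤ Real.exp (MA*Δ) * ‖f s‖ + r * ‖uv s‖ := by
      rw [mulE_sub]
      exact le_trans (norm_sub_le _ _) (add_le_add a1 a2)
    have hu_le : ‖uv s‖ ≤ ‖f s‖ + ‖f s - uv s‖ := by
      have huv2 : uv s = f s - (f s - uv s) := by abel
      have hn := norm_sub_le (f s) (f s - uv s)
      rwa [← huv2] at hn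
    have b1 : ‖f s - uv s‖ ≤ r * (Real.exp (MA*Δ) * ‖f s‖ + r * ‖uv s‖) :=
      le_trans a3 (mul_le_mul_of_nonneg_left tineq hr0)
    have hr4 : r * r ≤ 1/4 := by nlinarith
    rw [hKvdef]
    nlinarith [b1, hu_le, norm_nonneg (f s), norm_nonneg (uv s),
      norm_nonneg (f s - uv s), Real.exp_pos (MA*Δ), hr0, hr4]
  have hubound : ∀ s ∈ Ici (0:ℝ), ‖uv s‖ ≤ (1 + Kv) * ‖f s‖ := by
    intro s hs
    have huv2 : uv s = f s - (f s - uv s) := by abel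
    have hn := norm_sub_le (f s) (f s - uv s)
    rw [← huv2] at hn
    calc ‖uv s‖ ≤ ‖f s‖ + ‖f s - uv s‖ := hn
      _ ≤ ‖f s‖ + Kv * ‖f s‖ := by linarith [hvbound s hs]
      _ = (1 + Kv) * ‖f s‖ := by ring
  -- decay and integrability of `w`
  have hwdecay : ∀ s ∈ Ici (0:ℝ), ‖w s‖ ≤ (C * (Kv * Mf)) * Real.exp (-lam * s) := by
    intro s hs
    have h := hV s hs 0 h00 hs (f s - uv s) (hvvmem s hs)
    rw [hΦ0, Matrix.one_mul] at h
    rw [hwvv s hs]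
    have hℓ : lam * (0 - s) = -lam * s := by ring
    rw [hℓ] at h
    calc ‖mulE (Φ s)⁻¹ (f s - uv s)‖ ≤ C * Real.exp (-lam * s) * ‖f s - uv s‖ := h
      _ ≤ C * Real.exp (-lam * s) * (Kv * Mf) := by
          have h1 := hvbound s hs
          have h2 := hMf s hs
          have h3 : ‖f s - uv s‖ ≤ Kv * Mf :=
            le_trans h1 (mul_le_mul_of_nonneg_left h2 hKv0)
          have h4 : 0 ≤ C * Real.exp (-lam * s) := by positivity
          exact mul_le_mul_of_nonneg_left h3 h4
      _ = (C * (Kv * Mf)) * Real.exp (-lam * s) := by ring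
  have hwint : IntegrableOn w (Ioi (0:ℝ)) := by
    refine Integrable.mono' (g := fun s => (C * (Kv * Mf)) * Real.exp (-lam * s)) ?_ ?_ ?_
    · exact (exp_neg_integrableOn_Ioi 0 hlam).const_mul _
    · exact hwc.aestronglyMeasurable.restrict
    · refine (ae_restrict_iff' measurableSet_Ioi).2 (Filter.Eventually.of_forall ?_)
      exact fun s hs => hwdecay s (mem_Ici.2 (le_of_lt hs))
  set vinf : EuclideanSpace ℝ (Fin n) := ∫ s in Ioi (0:ℝ), w s with hvinfdef
  set c : ℝ → EuclideanSpace ℝ (Fin n) := fun t => (∫ s in (0:ℝ)..t, g s) - vinf with hcdef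
  set φ : ℝ → EuclideanSpace ℝ (Fin n) := fun t => mulE (Φ t) (c t) with hφdef
  refine ⟨φ, ?_, ?_⟩
  · -- φ is a solution
    intro t ht
    have hcd : HasDerivWithinAt c (g t) (Ici 0) t := by
      rw [hcdef]
      exact (((hgc.integral_hasStrictDerivAt 0 t).hasDerivAt).sub_const vinf).hasDerivWithinAt
    have hsum : ∀ τ, φ τ = ∑ j, c τ j • mulE (Φ τ) (EuclideanSpace.single j (1:ℝ)) := by
      intro τ
      rw [hφdef]
      exact mulE_sum_repr (Φ τ) (c τ)
    have hterm : ∀ j : Fin n,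
        HasDerivWithinAt (fun τ => c τ j • mulE (Φ τ) (EuclideanSpace.single j (1:ℝ)))
          (c t j • mulE (A t) (mulE (Φ t) (EuclideanSpace.single j (1:ℝ)))
            + g t j • mulE (Φ t) (EuclideanSpace.single j (1:ℝ))) (Ici 0) t := by
      intro j
      have h1 : HasDerivWithinAt (fun τ => c τ j) (g t j) (Ici 0) t := by
        have h2 := (EuclideanSpace.proj (𝕜 := ℝ) j).hasFDerivAt.comp_hasDerivWithinAt t hcd
        exact h2
      exact h1.smul (hΦd t ht (EuclideanSpace.single j (1:ℝ)))
    have hderiv := HasDerivWithinAt.fun_sum (fun j (_ : j ∈ Finset.univ) => hterm j)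
    have hfun : (fun τ => ∑ j, c τ j • mulE (Φ τ) (EuclideanSpace.single j (1:ℝ))) = φ :=
      funext fun τ => (hsum τ).symm
    rw [hfun] at hderiv
    have hval : ∑ j, (c t j • mulE (A t) (mulE (Φ t) (EuclideanSpace.single j (1:ℝ)))
          + g t j • mulE (Φ t) (EuclideanSpace.single j (1:ℝ)))
        = mulE (A t) (φ t) + f t := by
      rw [Finset.sum_add_distrib]
      congr 1
      · rw [hsum t, mulE_def, map_sum]
        refine (Finset.sum_congr rfl fun j _ => ?_).symm
        rw [_root_.map_smul]
        rfl
      · rw [← mulE_sum_repr (Φ t) (g t), hgval t ht, hPhiInvR t ht]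
    rw [hval] at hderiv
    exact hderiv
  · -- φ is bounded
    refine ⟨C * ((1+Kv)*Mf) / lam + C * (Kv*Mf) / lam, ?_⟩
    intro t ht
    have hprg_int : IntegrableOn (fun s => prU (g s)) (Ioc (0:ℝ) t) :=
      (hprUc.comp hgc).integrableOn_Ioc
    have hw_int_Ioc : IntegrableOn w (Ioc (0:ℝ) t) := hwc.integrableOn_Ioc
    have hw_int_Ioi_t : IntegrableOn w (Ioi t) := hwint.mono_set (Ioi_subset_Ioi ht)
    have hsplit : c t = (∫ s in Ioc (0:ℝ) t, prU (g s)) - ∫ s in Ioi t, w s := by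
      rw [hcdef]
      show (∫ s in (0:ℝ)..t, g s) - vinf = _
      rw [intervalIntegral.integral_of_le ht]
      have h1 : ∫ s in Ioc (0:ℝ) t, g s
          = (∫ s in Ioc (0:ℝ) t, prU (g s)) + ∫ s in Ioc (0:ℝ) t, w s := by
        rw [← integral_add hprg_int hw_int_Ioc]
        have hfun : (fun s => prU (g s) + w s) = g := by
          funext s
          rw [hwdef]
          show prU (g s) + (g s - prU (g s)) = g s
          abel
        rw [hfun]
      have h2 : vinf = (∫ s in Ioc (0:ℝ) t, w s) + ∫ s in Ioi t, w s := by
        rw [hvinfdef, ← Ioc_union_Ioi_eq_Ioi ht]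
        exact setIntegral_union (Ioc_disjoint_Ioi le_rfl) measurableSet_Ioi hw_int_Ioc hw_int_Ioi_t
      rw [h1, h2]
      abel
    set L : EuclideanSpace ℝ (Fin n) →L[ℝ] EuclideanSpace ℝ (Fin n) :=
      Matrix.toEuclideanCLM (𝕜 := ℝ) (Φ t) with hLdef
    have hφsplit : φ t = (∫ s in Ioc (0:ℝ) t, L (prU (g s))) - ∫ s in Ioi t, L (w s) := by
      rw [hφdef]
      show mulE (Φ t) (c t) = _
      rw [hsplit, mulE_def, map_sub, L.integral_comp_comm hprg_int,
        L.integral_comp_comm hw_int_Ioi_t]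
    -- first term
    have hbd1 : ‖∫ s in Ioc (0:ℝ) t, L (prU (g s))‖ ≤ C * ((1+Kv)*Mf) / lam := by
      have hptw : ∀ s ∈ Ioc (0:ℝ) t,
          ‖L (prU (g s))‖ ≤ (C * ((1+Kv)*Mf)) * Real.exp (lam*s - lam*t) := by
        intro s hs
        have hs0 : s ∈ Ici (0:ℝ) := le_of_lt hs.1
        have hid : L (prU (g s)) = mulE (Φ t * (Φ s)⁻¹) (uv s) := by
          rw [huvdef]
          show L (prU (g s)) = mulE (Φ t * (Φ s)⁻¹) (mulE (Φ s) (prU (g s)))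
          rw [← mulE_mulE]
          have hmm : Φ t * (Φ s)⁻¹ * Φ s = Φ t := by
            rw [Matrix.mul_assoc, Matrix.nonsing_inv_mul _ (hdet s hs0), Matrix.mul_one]
          rw [hmm]
          rfl
        rw [hid]
        have h := hU s hs0 t hs.2 (uv s) (huvmem s hs0)
        have hexp : -lam * (t - s) = lam*s - lam*t := by ring
        rw [hexp] at h
        have h5 : ‖uv s‖ ≤ (1+Kv)*Mf :=
          le_trans (hubound s hs0) (mul_le_mul_of_nonneg_left (hMf s hs0) (by linarith))
        calc ‖mulE (Φ t * (Φ s)⁻¹) (uv s)‖ ≤ C * Real.exp (lam*s - lam*t) * ‖uv s‖ := h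
          _ ≤ C * Real.exp (lam*s-lam*t) * ((1+Kv)*Mf) :=
              mul_le_mul_of_nonneg_left h5 (by positivity)
          _ = (C * ((1+Kv)*Mf)) * Real.exp (lam*s - lam*t) := by ring
      have hint_exp : IntegrableOn
          (fun s => (C*((1+Kv)*Mf)) * Real.exp (lam*s - lam*t)) (Ioc (0:ℝ) t) :=
        Continuous.integrableOn_Ioc (by fun_prop)
      have h6 := norm_integral_le_of_norm_le hint_exp
        ((ae_restrict_iff' measurableSet_Ioc).2 (Filter.Eventually.of_forall hptw))
      refine le_trans h6 ?_
      have hF : ∀ s : ℝ, HasDerivAt (fun σ => Real.exp (lam*σ - lam*t)/lam)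
          (Real.exp (lam*s - lam*t)) s := by
        intro s
        have h1 : HasDerivAt (fun σ : ℝ => lam*σ - lam*t) lam s := by
          simpa using ((hasDerivAt_id s).const_mul lam).sub_const (lam*t)
        have h3 := h1.exp.div_const lam
        simpa [mul_div_assoc, mul_div_cancel_right₀ _ hlam.ne'] using h3
      have hIcalc : (∫ s in (0:ℝ)..t, Real.exp (lam*s - lam*t))
          = Real.exp (lam*t - lam*t)/lam - Real.exp (lam*0 - lam*t)/lam :=
        intervalIntegral.integral_eq_sub_of_hasDerivAt (fun s _ => hF s)
          (Continuous.intervalIntegrable (by fun_prop) 0 t)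
      rw [← intervalIntegral.integral_of_le ht, intervalIntegral.integral_const_mul, hIcalc]
      have hpos : 0 ≤ Real.exp (lam*0 - lam*t)/lam := by positivity
      have hone : Real.exp (lam*t - lam*t) = 1 := by rw [sub_self, Real.exp_zero]
      rw [hone]
      have hCM : 0 ≤ C*((1+Kv)*Mf) := by positivity
      calc C*((1+Kv)*Mf) * (1/lam - Real.exp (lam*0 - lam*t)/lam)
          ≤ C*((1+Kv)*Mf) * (1/lam) := by
            apply mul_le_mul_of_nonneg_left _ hCM
            linarith
        _ = C * ((1+Kv)*Mf) / lam := by ring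
    -- second term
    have hbd2 : ‖∫ s in Ioi t, L (w s)‖ ≤ C * (Kv*Mf) / lam := by
      have hLw_int : IntegrableOn (fun s => L (w s)) (Ioi t) := L.integrable_comp hw_int_Ioi_t
      have hptw2 : ∀ s ∈ Ioi t,
          ‖L (w s)‖ ≤ (C*(Kv*Mf)*Real.exp (lam*t)) * Real.exp (-lam*s) := by
        intro s hs
        have hst : t ≤ s := le_of_lt hs
        have hs0 : s ∈ Ici (0:ℝ) := le_trans ht hst
        have hid : L (w s) = mulE (Φ t * (Φ s)⁻¹) (f s - uv s) := by
          rw [hwvv s hs0]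
          show mulE (Φ t) (mulE (Φ s)⁻¹ (f s - uv s)) = _
          rw [← mulE_mulE]
        rw [hid]
        have h := hV s hs0 t ht hst (f s - uv s) (hvvmem s hs0)
        have h5 : ‖f s - uv s‖ ≤ Kv*Mf :=
          le_trans (hvbound s hs0) (mul_le_mul_of_nonneg_left (hMf s hs0) hKv0)
        have hexp : lam * (t - s) = lam*t + (-lam*s) := by ring
        rw [hexp, Real.exp_add] at h
        calc ‖mulE (Φ t * (Φ s)⁻¹) (f s - uv s)‖
            ≤ C * (Real.exp (lam*t) * Real.exp (-lam*s)) * ‖f s - uv s‖ := h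
          _ ≤ C * (Real.exp (lam*t) * Real.exp (-lam*s)) * (Kv*Mf) :=
              mul_le_mul_of_nonneg_left h5 (by positivity)
          _ = (C*(Kv*Mf)*Real.exp (lam*t)) * Real.exp (-lam*s) := by ring
      have hint_exp2 : IntegrableOn
          (fun s => (C*(Kv*Mf)*Real.exp (lam*t)) * Real.exp (-lam*s)) (Ioi t) :=
        (exp_neg_integrableOn_Ioi t hlam).const_mul _
      have h6 := norm_integral_le_of_norm_le hint_exp2
        ((ae_restrict_iff' measurableSet_Ioi).2 (Filter.Eventually.of_forall hptw2))
      refine le_trans h6 ?_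
      have hIoi : (∫ s in Ioi t, Real.exp (-lam*s)) = Real.exp (-lam*t)/lam := by
        have hF2 : ∀ s ∈ Ici t, HasDerivAt (fun σ => -(Real.exp (-lam*σ)/lam))
            (Real.exp (-lam*s)) s := by
          intro s _
          have h1 : HasDerivAt (fun σ : ℝ => -lam*σ) (-lam) s := by
            simpa using (hasDerivAt_id s).const_mul (-lam)
          have h3 := (h1.exp.div_const lam).neg
          have hsimp : -(Real.exp (-lam*s) * -lam / lam) = Real.exp (-lam*s) := by
            field_simp
          rw [hsimp] at h3
          exact h3
        have htend : Filter.Tendsto (fun σ => -(Real.exp (-lam*σ)/lam)) Filter.atTop (nhds 0) := by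
          have h1 : Filter.Tendsto (fun σ : ℝ => lam*σ) Filter.atTop Filter.atTop :=
            Filter.Tendsto.const_mul_atTop hlam Filter.tendsto_id
          have h2 : Filter.Tendsto (fun σ : ℝ => Real.exp (-lam*σ)) Filter.atTop (nhds 0) := by
            have h3 := Real.tendsto_exp_neg_atTop_nhds_zero.comp h1
            refine h3.congr fun σ => ?_
            simp [Function.comp, neg_mul]
          have h4 := (h2.div_const lam).neg
          simpa using h4
        have := integral_Ioi_of_hasDerivAt_of_tendsto' hF2
          (exp_neg_integrableOn_Ioi t hlam) htend
        rw [this]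
        ring
      rw [integral_const_mul, hIoi]
      have hexpinv : Real.exp (lam*t) * (Real.exp (-lam*t)/lam) = 1/lam := by
        rw [← mul_div_assoc, ← Real.exp_add]
        simp
      refine le_of_eq ?_
      calc C*(Kv*Mf)*Real.exp (lam*t) * (Real.exp (-lam*t)/lam)
          = C*(Kv*Mf) * (Real.exp (lam*t) * (Real.exp (-lam*t)/lam)) := by ring
        _ = C*(Kv*Mf) * (1/lam) := by rw [hexpinv]
        _ = C*(Kv*Mf)/lam := by ring
    calc ‖φ t‖ ≤ ‖∫ s in Ioc (0:ℝ) t, L (prU (g s))‖ + ‖∫ s in Ioi t, L (w s)‖ := by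
          rw [hφsplit]; exact norm_sub_le _ _
      _ ≤ C * ((1+Kv)*Mf) / lam + C * (Kv*Mf) / lam := add_le_add hbd1 hbd2
end

section
/- Let A : [0,∞) → M_n(ℝ) be bounded and continuous, and suppose ẋ = A(t)x is hyperbolic with hyperbolicity constants C, λ₀. Then for every λ₁ ∈ (0, λ₀) there exists K > 0 such that for every λ ∈ [0, λ₁], every C' > 0, and every continuous f : [0,∞) → ℝⁿ with |f(t)| ≤ C' e^{−λt} for all t ≥ 0, there exists a solution φ of φ' = A(t)φ + f(t) with |φ(t)| ≤ K C' e^{−λt} for all t ≥ 0. -/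
open Set Filter

section AuxiliaryLemmas

open MeasureTheory intervalIntegral Real

lemma aux_integral_exp_mul {b : ℝ} (hb : b ≠ 0) (a t : ℝ) :
    ∫ x in a..t, Real.exp (b*x) = (Real.exp (b*t) - Real.exp (b*a))/b := by
  have h : ∀ x ∈ uIcc a t, HasDerivAt (fun y => Real.exp (b*y)/b) (Real.exp (b*x)) x := by
    intro x _
    have h1 : HasDerivAt (fun y : ℝ => b*y) b x := by simpa using (hasDerivAt_id x).const_mul b
    have h3 := h1.exp.div_const b
    refine h3.congr_deriv ?_
    field_simp
  rw [intervalIntegral.integral_eq_sub_of_hasDerivAt h ((Real.continuous_exp.comp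
    (continuous_const.mul continuous_id)).intervalIntegrable a t)]
  ring

lemma aux_integral_exp_neg_Ioi {b : ℝ} (hb : 0 < b) (t : ℝ) :
    ∫ x in Ioi t, Real.exp (-(b*x)) = Real.exp (-(b*t))/b := by
  have h := integral_Ioi_of_hasDerivAt_of_tendsto
    (f := fun x => -Real.exp (-(b*x))/b) (f' := fun x => Real.exp (-(b*x))) (a := t) (m := 0)
    ?_ ?_ ?_ ?_
  · rw [h]; ring
  · apply Continuous.continuousWithinAt; fun_prop
  · intro x _
    have h1 : HasDerivAt (fun y : ℝ => -(b*y)) (-b) x := by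
      simpa using (hasDerivAt_neg x).const_mul b
    have h2 := (h1.exp.neg).div_const b
    refine h2.congr_deriv ?_
    field_simp
  · simpa [neg_mul] using exp_neg_integrableOn_Ioi t hb
  · have h1 : Filter.Tendsto (fun x : ℝ => -(b*x)) Filter.atTop Filter.atBot := by
      apply Filter.tendsto_neg_atBot_iff.mpr
      exact Filter.Tendsto.const_mul_atTop hb Filter.tendsto_id
    have h2 := (Real.tendsto_exp_atBot.comp h1).neg.div_const b
    simpa using h2

lemma aux_mulE_clm {n : ℕ} (M : Matrix (Fin n) (Fin n) ℝ) (x : EuclideanSpace ℝ (Fin n)) :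
    mulE M x = Matrix.toEuclideanCLM (𝕜 := ℝ) M x := rfl

lemma aux_mulE_mul {n : ℕ} (M N : Matrix (Fin n) (Fin n) ℝ) (x : EuclideanSpace ℝ (Fin n)) :
    mulE (M * N) x = mulE M (mulE N x) := by
  simp [aux_mulE_clm, map_mul]

lemma aux_mulE_one {n : ℕ} (x : EuclideanSpace ℝ (Fin n)) : mulE 1 x = x := by
  simp [aux_mulE_clm, map_one]

/-- The continuous linear equivalence between `Fin n → E` and `E →L[ℝ] E` given by values
on the standard basis. -/
noncomputable def auxEquiv (n : ℕ) : (Fin n → EuclideanSpace ℝ (Fin n)) ≃L[ℝ]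
    (EuclideanSpace ℝ (Fin n) →L[ℝ] EuclideanSpace ℝ (Fin n)) :=
  LinearEquiv.toContinuousLinearEquiv
    (((EuclideanSpace.basisFun (Fin n) ℝ).toBasis.constr ℝ).trans
      (LinearMap.toContinuousLinearMap))

lemma auxEquiv_apply_basis {n : ℕ} (v : Fin n → EuclideanSpace ℝ (Fin n)) (j : Fin n) :
    auxEquiv n v ((EuclideanSpace.basisFun (Fin n) ℝ).toBasis j) = v j := by
  rw [auxEquiv]
  rw [show ((((EuclideanSpace.basisFun (Fin n) ℝ).toBasis.constr ℝ).trans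
      (LinearMap.toContinuousLinearMap)).toContinuousLinearEquiv v : EuclideanSpace ℝ (Fin n) →L[ℝ] EuclideanSpace ℝ (Fin n)) = ((((EuclideanSpace.basisFun (Fin n) ℝ).toBasis.constr ℝ).trans (LinearMap.toContinuousLinearMap)) v) from congrFun (LinearEquiv.coe_toContinuousLinearEquiv' _) v, LinearEquiv.trans_apply]
  erw [LinearMap.coe_toContinuousLinearMap']
  exact (EuclideanSpace.basisFun (Fin n) ℝ).toBasis.constr_basis ℝ v j

lemma aux_clm_eq {n : ℕ} (T : EuclideanSpace ℝ (Fin n) →L[ℝ] EuclideanSpace ℝ (Fin n)) :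
    auxEquiv n (fun j => T ((EuclideanSpace.basisFun (Fin n) ℝ).toBasis j)) = T := by
  apply ContinuousLinearMap.coe_injective
  apply Module.Basis.ext (EuclideanSpace.basisFun (Fin n) ℝ).toBasis
  intro j
  simpa using auxEquiv_apply_basis (fun j => T ((EuclideanSpace.basisFun (Fin n) ℝ).toBasis j)) j

/-- Derivative of the fundamental matrix, as a continuous-linear-map valued function. -/
lemma aux_cB_deriv {n : ℕ} {A Φ : ℝ → Matrix (Fin n) (Fin n) ℝ}
    (hΦ : IsFundamentalOn n A Φ) {t : ℝ} (ht : t ∈ Ici (0:ℝ)) :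
    HasDerivWithinAt (fun τ => Matrix.toEuclideanCLM (𝕜 := ℝ) (Φ τ))
      ((Matrix.toEuclideanCLM (𝕜 := ℝ) (A t)).comp (Matrix.toEuclideanCLM (𝕜 := ℝ) (Φ t)))
      (Ici 0) t := by
  set b := (EuclideanSpace.basisFun (Fin n) ℝ).toBasis
  have hG : HasDerivWithinAt (fun τ => fun j => mulE (Φ τ) (b j))
      (fun j => mulE (A t) (mulE (Φ t) (b j))) (Ici 0) t :=
    hasDerivWithinAt_pi.2 fun j => hΦ.2 t ht (b j)
  have := ((auxEquiv n).toContinuousLinearMap.hasFDerivAt.comp_hasDerivWithinAt t hG)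
  convert this using 1
  · rfl
  · rfl
  · rfl
  · funext τ
    simp only [ContinuousLinearEquiv.coe_coe, Function.comp]
    rw [← aux_clm_eq (Matrix.toEuclideanCLM (𝕜 := ℝ) (Φ τ))]
    rfl
  · simp only [ContinuousLinearEquiv.coe_coe]
    rw [← aux_clm_eq ((Matrix.toEuclideanCLM (𝕜 := ℝ) (A t)).comp (Matrix.toEuclideanCLM (𝕜 := ℝ) (Φ t)))]
    rfl

end AuxiliaryLemmas

set_option maxHeartbeats 3000000 in
/-- If `ẋ = A(t)x` is hyperbolic with constants `C, λ₀`, then for every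
`λ₁ ∈ (0, λ₀)` there is `K > 0` such that for every `λ ∈ [0, λ₁]`, every `C' > 0` and
every continuous `f` with `|f(t)| ≤ C' e^{−λt}`, there is a solution `φ` of
`φ' = A(t)φ + f` with `|φ(t)| ≤ K C' e^{−λt}` on `[0,∞)`. -/
theorem hyperbolic_exponentially_decaying_solutions (n : ℕ)
    (A Φ : ℝ → Matrix (Fin n) (Fin n) ℝ)
    (hAc : ContinuousOn A (Ici 0))
    (hAb : ∃ M : ℝ, ∀ t ∈ Ici (0:ℝ), ∀ x : EuclideanSpace ℝ (Fin n),
      ‖mulE (A t) x‖ ≤ M * ‖x‖)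
    (hΦ : IsFundamentalOn n A Φ)
    (U V : ℝ → Submodule ℝ (EuclideanSpace ℝ (Fin n))) (C lam₀ : ℝ)
    (hhyp : IsHyperbolicWith n Φ U V C lam₀) :
    ∀ lam₁ ∈ Ioo 0 lam₀, ∃ K > (0:ℝ), ∀ lam ∈ Icc 0 lam₁, ∀ C' > (0:ℝ),
      ∀ f : ℝ → EuclideanSpace ℝ (Fin n), ContinuousOn f (Ici 0) →
        (∀ t ∈ Ici (0:ℝ), ‖f t‖ ≤ C' * Real.exp (-lam * t)) →
        ∃ φ : ℝ → EuclideanSpace ℝ (Fin n),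
          (∀ t ∈ Ici (0:ℝ), HasDerivWithinAt φ (mulE (A t) (φ t) + f t) (Ici 0) t) ∧
          ∀ t ∈ Ici (0:ℝ), ‖φ t‖ ≤ K * C' * Real.exp (-lam * t) := by
  classical
  obtain ⟨hΦ0, hΦd⟩ := hΦ
  obtain ⟨hC, hl0, hcompl, hmap, hUest, hVest⟩ := hhyp
  intro lam₁ hlam₁
  by_cases hsing : Subsingleton (EuclideanSpace ℝ (Fin n))
  · refine ⟨1, one_pos, ?_⟩
    intro lam hlam C' hC' f hfc hfb
    refine ⟨fun _ => 0, ?_, ?_⟩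
    · intro t ht
      have h0 : mulE (A t) 0 + f t = (0 : EuclideanSpace ℝ (Fin n)) := Subsingleton.elim _ _
      rw [h0]
      exact hasDerivWithinAt_const t _ 0
    · intro t ht
      simp only [norm_zero]
      positivity
  -- main case: all `Φ t`, `t ≥ 0`, are invertible
  have hunit : ∀ t ∈ Ici (0:ℝ), IsUnit (Φ t).det := by
    by_contra hcon
    push_neg at hcon
    obtain ⟨τ, hτ, hnu⟩ := hcon
    have hinv0 : (Φ τ)⁻¹ = 0 := Matrix.nonsing_inv_apply_not_isUnit _ hnu
    have h1 := (hmap 0 self_mem_Ici τ hτ).1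
    have h2 := (hmap 0 self_mem_Ici τ hτ).2
    rw [hinv0, mul_zero, map_zero, Submodule.map_zero] at h1 h2
    have hcompl0 := hcompl 0 self_mem_Ici
    rw [← h1, ← h2] at hcompl0
    have htop : (⊥ : Submodule ℝ (EuclideanSpace ℝ (Fin n))) = ⊤ := by
      simpa using hcompl0.sup_eq_top
    refine hsing ⟨fun a b => ?_⟩
    have ha : a ∈ (⊥ : Submodule ℝ (EuclideanSpace ℝ (Fin n))) := htop ▸ Submodule.mem_top
    have hb : b ∈ (⊥ : Submodule ℝ (EuclideanSpace ℝ (Fin n))) := htop ▸ Submodule.mem_top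
    rw [Submodule.mem_bot] at ha hb
    rw [ha, hb]
  obtain ⟨M₀, hM₀⟩ := hAb
  set M : ℝ := max M₀ 0 with hMdef
  have hM0 : 0 ≤ M := le_max_right _ _
  have hM : ∀ t ∈ Ici (0:ℝ), ∀ x : EuclideanSpace ℝ (Fin n), ‖mulE (A t) x‖ ≤ M * ‖x‖ := by
    intro t ht x
    exact (hM₀ t ht x).trans (mul_le_mul_of_nonneg_right (le_max_left _ _) (norm_nonneg x))
  set cB : ℝ → (EuclideanSpace ℝ (Fin n) →L[ℝ] EuclideanSpace ℝ (Fin n)) :=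
    fun τ => Matrix.toEuclideanCLM (𝕜 := ℝ) (Φ τ) with hcBdef
  set icB : ℝ → (EuclideanSpace ℝ (Fin n) →L[ℝ] EuclideanSpace ℝ (Fin n)) :=
    fun τ => Matrix.toEuclideanCLM (𝕜 := ℝ) (Φ τ)⁻¹ with hicBdef
  have hTst : ∀ (a b : ℝ) (y : EuclideanSpace ℝ (Fin n)),
      mulE (Φ a * (Φ b)⁻¹) y = cB a (icB b y) := by
    intro a b y
    rw [aux_mulE_mul]
    rfl
  have hBB : ∀ t ∈ Ici (0:ℝ), ∀ y : EuclideanSpace ℝ (Fin n), cB t (icB t y) = y := by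
    intro t ht y
    have h : Φ t * (Φ t)⁻¹ = 1 := Matrix.mul_nonsing_inv _ (hunit t ht)
    rw [← hTst, h, aux_mulE_one]
  have hBB' : ∀ t ∈ Ici (0:ℝ), ∀ y : EuclideanSpace ℝ (Fin n), icB t (cB t y) = y := by
    intro t ht y
    have h : (Φ t)⁻¹ * Φ t = 1 := Matrix.nonsing_inv_mul _ (hunit t ht)
    have : mulE ((Φ t)⁻¹ * Φ t) y = icB t (cB t y) := by rw [aux_mulE_mul]; rfl
    rw [← this, h, aux_mulE_one]
  have hB0 : ∀ y : EuclideanSpace ℝ (Fin n), cB 0 y = y := by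
    intro y
    have : mulE (Φ 0) y = cB 0 y := rfl
    rw [← this, hΦ0, aux_mulE_one]
  have hcBc : ContinuousOn cB (Ici 0) :=
    fun t ht => (aux_cB_deriv ⟨hΦ0, hΦd⟩ ht).continuousWithinAt
  have hRinv : ∀ s ∈ Ici (0:ℝ), Ring.inverse (cB s) = icB s := by
    intro s hs
    have h1 : cB s * icB s = 1 := by
      refine ContinuousLinearMap.ext fun y => ?_
      simpa [ContinuousLinearMap.mul_apply] using hBB s hs y
    have h2 : icB s * cB s = 1 := by
      refine ContinuousLinearMap.ext fun y => ?_
      simpa [ContinuousLinearMap.mul_apply] using hBB' s hs y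
    exact Ring.inverse_unit ⟨cB s, icB s, h1, h2⟩
  have hicBc : ContinuousOn icB (Ici 0) := by
    intro t ht
    have h1 : cB t * icB t = 1 := by
      refine ContinuousLinearMap.ext fun y => ?_
      simpa [ContinuousLinearMap.mul_apply] using hBB t ht y
    have h2 : icB t * cB t = 1 := by
      refine ContinuousLinearMap.ext fun y => ?_
      simpa [ContinuousLinearMap.mul_apply] using hBB' t ht y
    have hinvc : ContinuousAt (Ring.inverse : (EuclideanSpace ℝ (Fin n) →L[ℝ] EuclideanSpace ℝ (Fin n)) → _) (cB t) :=
      NormedRing.inverse_continuousAt ⟨cB t, icB t, h1, h2⟩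
    have hcw : ContinuousWithinAt (fun s => Ring.inverse (cB s)) (Ici 0) t :=
      hinvc.comp_continuousWithinAt (hcBc t ht)
    exact hcw.congr (fun s hs => (hRinv s hs).symm) (hRinv t ht).symm
  -- Gronwall estimate for the forward evolution
  have hgrw : ∀ t ∈ Ici (0:ℝ), ∀ s, t ≤ s → ∀ x : EuclideanSpace ℝ (Fin n),
      ‖cB s (icB t x)‖ ≤ Real.exp (M*(s-t)) * ‖x‖ := by
    intro t ht s hts x
    have hIcc : Icc t s ⊆ Ici (0:ℝ) := fun u hu => le_trans ht hu.1
    have key := norm_le_gronwallBound_of_norm_deriv_right_le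
      (f := fun τ => cB τ (icB t x)) (f' := fun τ => mulE (A τ) (cB τ (icB t x)))
      (δ := ‖x‖) (K := M) (ε := 0) (a := t) (b := s) ?_ ?_ ?_ ?_ s (right_mem_Icc.2 hts)
    · rwa [gronwallBound_ε0, mul_comm] at key
    · intro u hu
      exact ((hΦd u (hIcc hu) (icB t x)).continuousWithinAt).mono hIcc
    · intro u hu
      have h0u : (0:ℝ) ≤ u := le_trans ht hu.1
      exact (hΦd u h0u (icB t x)).mono (Ici_subset_Ici.2 h0u)
    · show ‖cB t (icB t x)‖ ≤ ‖x‖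
      rw [hBB t ht x]
    · intro u hu
      rw [add_zero]
      exact hM u (le_trans ht hu.1) _
  -- choice of the auxiliary length `L` and the projection bounds
  set L : ℝ := Real.log (2*C^2+1) / lam₀ with hLdef
  have hL0 : 0 ≤ L := div_nonneg (Real.log_nonneg (by nlinarith)) hl0.le
  have hexpL : Real.exp (-(lam₀*L)) = (2*C^2+1)⁻¹ := by
    have h : lam₀ * L = Real.log (2*C^2+1) := by
      rw [hLdef]; field_simp
    rw [Real.exp_neg, h, Real.exp_log (by positivity)]
  have hexpL1 : Real.exp (-(lam₀*L)) ≤ 1 := Real.exp_le_one_iff.2 (by nlinarith)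
  set Cq : ℝ := 2*C*Real.exp (M*L) + 1 with hCqdef
  have hCq0 : 0 < Cq := by positivity
  set Cp : ℝ := Cq + 1 with hCpdef
  have hCp0 : 0 < Cp := by positivity
  have hQ : ∀ t ∈ Ici (0:ℝ), ∀ u ∈ U t, ∀ v ∈ V t, ‖v‖ ≤ Cq * ‖u + v‖ := by
    intro t ht u hu v hv
    set s : ℝ := t + L with hsdef
    have hs : s ∈ Ici (0:ℝ) := le_trans ht (le_add_of_nonneg_right hL0)
    have hts : t ≤ s := le_add_of_nonneg_right hL0
    have hst : s - t = L := by rw [hsdef]; ring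
    have hvS_mem : cB s (icB t v) ∈ V s := by
      rw [← (hmap s hs t ht).2]
      exact ⟨v, hv, hTst s t v⟩
    have h1 : ‖v‖ ≤ C * Real.exp (-(lam₀*L)) * ‖cB s (icB t v)‖ := by
      have h := hVest s hs t ht hts (cB s (icB t v)) hvS_mem
      rw [hTst, hBB' s hs, hBB t ht] at h
      have harg : lam₀ * (t - s) = -(lam₀*L) := by rw [hsdef]; ring
      rwa [harg] at h
    have h2 : ‖cB s (icB t u)‖ ≤ C * Real.exp (-(lam₀*L)) * ‖u‖ := by
      have h := hUest t ht s hts u hu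
      rw [hTst] at h
      have harg : -lam₀ * (s - t) = -(lam₀*L) := by rw [hsdef]; ring
      rwa [harg] at h
    have h3 : ‖cB s (icB t (u+v))‖ ≤ Real.exp (M*L) * ‖u+v‖ := by
      have h := hgrw t ht s hts (u+v)
      rwa [hst] at h
    have h4 : ‖cB s (icB t v)‖ ≤ ‖cB s (icB t (u+v))‖ + ‖cB s (icB t u)‖ := by
      have he : cB s (icB t v) = cB s (icB t (u+v)) - cB s (icB t u) := by
        rw [← map_sub, ← map_sub, add_sub_cancel_left]
      rw [he]
      exact norm_sub_le _ _
    have i3 : ‖u‖ ≤ ‖u+v‖ + ‖v‖ := by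
      simpa using norm_sub_le (u+v) v
    set a : ℝ := C * Real.exp (-(lam₀*L)) with hadef
    have ha : 0 ≤ a := by positivity
    have hkey : a * a ≤ 1/2 := by
      rw [hadef, hexpL]
      have hd : (0:ℝ) < 2*C^2+1 := by positivity
      rw [show C*(2*C^2+1)⁻¹*(C*(2*C^2+1)⁻¹) = C^2/((2*C^2+1)^2) by field_simp,
        div_le_iff₀ (by positivity)]
      nlinarith
    have ha_le : a ≤ C := by
      rw [hadef]
      nlinarith
    have hE0 : (0:ℝ) < Real.exp (M*L) := Real.exp_pos _
    have j1 : ‖v‖ ≤ a * (Real.exp (M*L) * ‖u+v‖ + a*‖u‖) := by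
      refine h1.trans (mul_le_mul_of_nonneg_left ?_ ha)
      exact h4.trans (add_le_add h3 h2)
    have j2 : a*(a*‖u‖) ≤ a*(a*(‖u+v‖+‖v‖)) :=
      mul_le_mul_of_nonneg_left (mul_le_mul_of_nonneg_left i3 ha) ha
    have j4 : a*(a*(‖u+v‖+‖v‖)) ≤ (1/2)*(‖u+v‖+‖v‖) := by
      have hnn : (0:ℝ) ≤ ‖u+v‖+‖v‖ := by positivity
      nlinarith
    have j5 : a*Real.exp (M*L)*‖u+v‖ ≤ C*Real.exp (M*L)*‖u+v‖ := by
      have : a*Real.exp (M*L) ≤ C*Real.exp (M*L) := mul_le_mul_of_nonneg_right ha_le hE0.le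
      exact mul_le_mul_of_nonneg_right this (norm_nonneg _)
    rw [hCqdef]
    nlinarith [j1, j2, j4, j5]
  have hP : ∀ t ∈ Ici (0:ℝ), ∀ u ∈ U t, ∀ v ∈ V t, ‖u‖ ≤ Cp * ‖u + v‖ := by
    intro t ht u hu v hv
    have h1 : ‖u‖ ≤ ‖u+v‖ + ‖v‖ := by
      simpa using norm_sub_le (u+v) v
    have h2 := hQ t ht u hu v hv
    rw [hCpdef]
    nlinarith [norm_nonneg (u+v)]
  -- the projection at time `0`
  have hc0 : IsCompl (U 0) (V 0) := hcompl 0 self_mem_Ici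
  set p : EuclideanSpace ℝ (Fin n) →L[ℝ] EuclideanSpace ℝ (Fin n) :=
    LinearMap.toContinuousLinearMap ((U 0).subtype ∘ₗ (U 0).projectionOnto (V 0) hc0)
    with hpdef
  have hpe : ∀ x : EuclideanSpace ℝ (Fin n),
      p x = ((U 0).projectionOnto (V 0) hc0 x : EuclideanSpace ℝ (Fin n)) := fun x => rfl
  have hpmem : ∀ x : EuclideanSpace ℝ (Fin n), p x ∈ U 0 := by
    intro x
    rw [hpe]
    exact Submodule.coe_mem _
  have hqmem : ∀ x : EuclideanSpace ℝ (Fin n), x - p x ∈ V 0 := by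
    intro x
    have h : (U 0).projectionOnto (V 0) hc0 (x - p x) = 0 := by
      rw [map_sub, hpe, Submodule.projectionOnto_apply_left hc0, sub_self]
    exact (Submodule.projectionOnto_apply_eq_zero_iff hc0).1 h
  -- decay estimates for the two components of the evolution
  have hE1 : ∀ τ ∈ Ici (0:ℝ), ∀ t, τ ≤ t → ∀ y : EuclideanSpace ℝ (Fin n),
      ‖cB t (p (icB τ y))‖ ≤ (C*Cp) * (Real.exp (-lam₀*(t-τ)) * ‖y‖) := by
    intro τ hτ t hτt y
    set w := icB τ y with hwdef
    have hz_mem : cB τ (p w) ∈ U τ := by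
      rw [← (hmap τ hτ 0 self_mem_Ici).1]
      refine ⟨p w, hpmem w, ?_⟩
      show mulE (Φ τ * (Φ 0)⁻¹) (p w) = cB τ (p w)
      rw [hΦ0, inv_one, mul_one]
      rfl
    have hz'_mem : cB τ (w - p w) ∈ V τ := by
      rw [← (hmap τ hτ 0 self_mem_Ici).2]
      refine ⟨w - p w, hqmem w, ?_⟩
      show mulE (Φ τ * (Φ 0)⁻¹) (w - p w) = cB τ (w - p w)
      rw [hΦ0, inv_one, mul_one]
      rfl
    have hsum : cB τ (p w) + cB τ (w - p w) = y := by
      rw [← map_add, add_sub_cancel, hwdef, hBB τ hτ]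
    have hzb : ‖cB τ (p w)‖ ≤ Cp * ‖y‖ := by
      have h := hP τ hτ _ hz_mem _ hz'_mem
      rwa [hsum] at h
    have hest := hUest τ hτ t hτt (cB τ (p w)) hz_mem
    rw [hTst, hBB' τ hτ] at hest
    calc ‖cB t (p w)‖ ≤ C * Real.exp (-lam₀*(t-τ)) * ‖cB τ (p w)‖ := hest
    _ ≤ C * Real.exp (-lam₀*(t-τ)) * (Cp * ‖y‖) := by
        exact mul_le_mul_of_nonneg_left hzb (by positivity)
    _ = (C*Cp) * (Real.exp (-lam₀*(t-τ)) * ‖y‖) := by ring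
  have hE2 : ∀ τ ∈ Ici (0:ℝ), ∀ t ∈ Ici (0:ℝ), t ≤ τ → ∀ y : EuclideanSpace ℝ (Fin n),
      ‖cB t (icB τ y - p (icB τ y))‖ ≤ (C*Cq) * (Real.exp (lam₀*(t-τ)) * ‖y‖) := by
    intro τ hτ t ht htτ y
    set w := icB τ y with hwdef
    have hz_mem : cB τ (p w) ∈ U τ := by
      rw [← (hmap τ hτ 0 self_mem_Ici).1]
      refine ⟨p w, hpmem w, ?_⟩
      show mulE (Φ τ * (Φ 0)⁻¹) (p w) = cB τ (p w)
      rw [hΦ0, inv_one, mul_one]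
      rfl
    have hz'_mem : cB τ (w - p w) ∈ V τ := by
      rw [← (hmap τ hτ 0 self_mem_Ici).2]
      refine ⟨w - p w, hqmem w, ?_⟩
      show mulE (Φ τ * (Φ 0)⁻¹) (w - p w) = cB τ (w - p w)
      rw [hΦ0, inv_one, mul_one]
      rfl
    have hsum : cB τ (p w) + cB τ (w - p w) = y := by
      rw [← map_add, add_sub_cancel, hwdef, hBB τ hτ]
    have hzb : ‖cB τ (w - p w)‖ ≤ Cq * ‖y‖ := by
      have h := hQ τ hτ _ hz_mem _ hz'_mem
      rwa [hsum] at h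
    have hest := hVest τ hτ t ht htτ (cB τ (w - p w)) hz'_mem
    rw [hTst, hBB' τ hτ] at hest
    calc ‖cB t (w - p w)‖ ≤ C * Real.exp (lam₀*(t-τ)) * ‖cB τ (w - p w)‖ := hest
    _ ≤ C * Real.exp (lam₀*(t-τ)) * (Cq * ‖y‖) := by
        exact mul_le_mul_of_nonneg_left hzb (by positivity)
    _ = (C*Cq) * (Real.exp (lam₀*(t-τ)) * ‖y‖) := by ring
  -- the constant `K`
  have hgap : 0 < lam₀ - lam₁ := sub_pos.2 hlam₁.2
  refine ⟨C*Cp*(lam₀ - lam₁)⁻¹ + C*Cq*lam₀⁻¹ + 1, by positivity, ?_⟩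
  intro lam hlam C' hC' f hfc hfb
  have hlam0 : 0 ≤ lam := hlam.1
  have hb : 0 < lam₀ - lam := by
    have := hlam.2
    linarith
  -- the inhomogeneity transported back by the evolution, and its components
  have hFc : ContinuousOn (fun τ => icB τ (f τ)) (Ici 0) := by
    have happ : Continuous (fun q : (EuclideanSpace ℝ (Fin n) →L[ℝ] EuclideanSpace ℝ (Fin n)) ×
        EuclideanSpace ℝ (Fin n) => q.1 q.2) := isBoundedBilinearMap_apply.continuous
    exact happ.comp_continuousOn (hicBc.prodMk hfc)
  have hac : ContinuousOn (fun τ => p (icB τ (f τ))) (Ici 0) :=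
    p.continuous.comp_continuousOn hFc
  have hgc : ContinuousOn (fun τ => icB τ (f τ) - p (icB τ (f τ))) (Ici 0) := hFc.sub hac
  have hgb : ∀ τ ∈ Ici (0:ℝ), ‖icB τ (f τ) - p (icB τ (f τ))‖ ≤ (C*Cq*C') * Real.exp (-(lam₀*τ)) := by
    intro τ hτ
    have h0 : icB τ (f τ) - p (icB τ (f τ)) = cB 0 (icB τ (f τ) - p (icB τ (f τ))) := (hB0 _).symm
    have e1 : Real.exp (lam₀*(0-τ)) = Real.exp (-(lam₀*τ)) := by ring_nf
    have e2 : ‖f τ‖ ≤ C' := by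
      have h := hfb τ hτ
      have : Real.exp (-lam*τ) ≤ 1 := Real.exp_le_one_iff.2 (by nlinarith [hlam0, mem_Ici.mp hτ])
      nlinarith
    calc ‖icB τ (f τ) - p (icB τ (f τ))‖ = ‖cB 0 (icB τ (f τ) - p (icB τ (f τ)))‖ := by rw [← h0]
    _ ≤ (C*Cq) * (Real.exp (lam₀*(0-τ)) * ‖f τ‖) := hE2 τ hτ 0 self_mem_Ici hτ (f τ)
    _ = (C*Cq) * (Real.exp (-(lam₀*τ)) * ‖f τ‖) := by rw [e1]
    _ ≤ (C*Cq) * (Real.exp (-(lam₀*τ)) * C') := by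
        exact mul_le_mul_of_nonneg_left
          (mul_le_mul_of_nonneg_left e2 (Real.exp_pos _).le) (by positivity)
    _ = (C*Cq*C') * Real.exp (-(lam₀*τ)) := by ring
  have hgmeas : MeasureTheory.AEStronglyMeasurable (fun τ => icB τ (f τ) - p (icB τ (f τ)))
      (MeasureTheory.volume.restrict (Ioi 0)) :=
    (hgc.mono Ioi_subset_Ici_self).aestronglyMeasurable measurableSet_Ioi
  have hgint : MeasureTheory.IntegrableOn (fun τ => icB τ (f τ) - p (icB τ (f τ))) (Ioi 0)
      MeasureTheory.volume := by
    refine MeasureTheory.Integrable.mono'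
      (g := fun τ => (C*Cq*C') * Real.exp (-(lam₀*τ))) ?_ hgmeas ?_
    · have h := (exp_neg_integrableOn_Ioi 0 hl0).const_mul (C*Cq*C')
      simpa [neg_mul] using h
    · rw [MeasureTheory.ae_restrict_iff' measurableSet_Ioi]
      filter_upwards with τ hτ
      exact hgb τ (le_of_lt hτ : (0:ℝ) ≤ τ)
  set ξ : EuclideanSpace ℝ (Fin n) := -∫ τ in Ioi (0:ℝ), (icB τ (f τ) - p (icB τ (f τ))) with hξdef
  refine ⟨fun t => cB t (ξ + ∫ τ in (0:ℝ)..t, icB τ (f τ)), ?_, ?_⟩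
  · -- derivative property
    intro t ht
    have hFint : IntervalIntegrable (fun τ => icB τ (f τ)) MeasureTheory.volume 0 t := by
      refine (hFc.mono ?_).intervalIntegrable
      intro x hx
      exact le_trans (le_min le_rfl ht) hx.1
    have hci : HasDerivWithinAt (fun u => ξ + ∫ τ in (0:ℝ)..u, icB τ (f τ)) (icB t (f t)) (Ici 0) t := by
      apply HasDerivWithinAt.const_add
      rcases eq_or_lt_of_le (mem_Ici.mp ht) with h0 | h0
      · obtain rfl : t = 0 := h0.symm
        exact intervalIntegral.integral_hasDerivWithinAt_right (t := Ioi (0:ℝ)) hFint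
          ((hFc.mono Ioi_subset_Ici_self).stronglyMeasurableAtFilter_nhdsWithin measurableSet_Ioi 0)
          ((hFc 0 self_mem_Ici).mono Ioi_subset_Ici_self)
      · have hnhds : Ici (0:ℝ) ∈ nhds t := Ici_mem_nhds h0
        have hFat : ContinuousAt (fun τ => icB τ (f τ)) t := (hFc t ht).continuousAt hnhds
        have hmeas : StronglyMeasurableAtFilter (fun τ => icB τ (f τ)) (nhds t)
            MeasureTheory.volume := by
          have h := (hFc.mono Ioi_subset_Ici_self).stronglyMeasurableAtFilter_nhdsWithin
            (μ := MeasureTheory.volume) measurableSet_Ioi t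
          rwa [nhdsWithin_eq_nhds.mpr (Ioi_mem_nhds h0)] at h
        exact (intervalIntegral.integral_hasDerivAt_right hFint hmeas hFat).hasDerivWithinAt
    have hφd := (aux_cB_deriv ⟨hΦ0, hΦd⟩ ht).clm_apply hci
    have he : ((Matrix.toEuclideanCLM (𝕜 := ℝ) (A t)).comp (cB t))
        (ξ + ∫ τ in (0:ℝ)..t, icB τ (f τ)) + cB t (icB t (f t))
        = mulE (A t) (cB t (ξ + ∫ τ in (0:ℝ)..t, icB τ (f τ))) + f t := by
      rw [hBB t ht (f t)]
      rfl
    rw [← he]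
    exact hφd
  · -- norm bound
    intro t ht
    have hsub1 : Ioc (0:ℝ) t ⊆ Ioi 0 := Ioc_subset_Ioi_self
    have hsub2 : Ioi t ⊆ Ioi (0:ℝ) := Ioi_subset_Ioi ht
    have hIccsub : Icc (0:ℝ) t ⊆ Ici 0 := fun x hx => hx.1
    have hint_a : MeasureTheory.IntegrableOn (fun τ => p (icB τ (f τ))) (Ioc 0 t)
        MeasureTheory.volume :=
      ((hac.mono hIccsub).integrableOn_Icc).mono_set Ioc_subset_Icc_self
    have hint_g1 : MeasureTheory.IntegrableOn (fun τ => icB τ (f τ) - p (icB τ (f τ))) (Ioc 0 t)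
        MeasureTheory.volume := hgint.mono_set hsub1
    have hint_g2 : MeasureTheory.IntegrableOn (fun τ => icB τ (f τ) - p (icB τ (f τ))) (Ioi t)
        MeasureTheory.volume := hgint.mono_set hsub2
    have hsplit : ∫ τ in Ioi (0:ℝ), (icB τ (f τ) - p (icB τ (f τ)))
        = (∫ τ in Ioc (0:ℝ) t, (icB τ (f τ) - p (icB τ (f τ))))
          + ∫ τ in Ioi t, (icB τ (f τ) - p (icB τ (f τ))) := by
      rw [← Ioc_union_Ioi_eq_Ioi ht]
      exact MeasureTheory.setIntegral_union (Ioc_disjoint_Ioi le_rfl) measurableSet_Ioi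
        hint_g1 hint_g2
    have hintF : ∫ τ in (0:ℝ)..t, icB τ (f τ) = ∫ τ in Ioc (0:ℝ) t, icB τ (f τ) :=
      intervalIntegral.integral_of_le ht
    have hFsplit : ∫ τ in Ioc (0:ℝ) t, icB τ (f τ)
        = (∫ τ in Ioc (0:ℝ) t, p (icB τ (f τ)))
          + ∫ τ in Ioc (0:ℝ) t, (icB τ (f τ) - p (icB τ (f τ))) := by
      rw [← MeasureTheory.integral_add hint_a hint_g1]
      congr 1
      funext τ
      abel
    have hct : ξ + ∫ τ in (0:ℝ)..t, icB τ (f τ)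
        = (∫ τ in Ioc (0:ℝ) t, p (icB τ (f τ)))
          - ∫ τ in Ioi t, (icB τ (f τ) - p (icB τ (f τ))) := by
      rw [hξdef, hintF, hFsplit, hsplit]
      abel
    have hφeq : cB t (ξ + ∫ τ in (0:ℝ)..t, icB τ (f τ))
        = (∫ τ in Ioc (0:ℝ) t, cB t (p (icB τ (f τ))))
          - ∫ τ in Ioi t, cB t (icB τ (f τ) - p (icB τ (f τ))) := by
      rw [hct, map_sub, ContinuousLinearMap.integral_comp_comm _ hint_a,
        ContinuousLinearMap.integral_comp_comm _ hint_g2]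
    show ‖cB t (ξ + ∫ τ in (0:ℝ)..t, icB τ (f τ))‖
        ≤ (C*Cp*(lam₀ - lam₁)⁻¹ + C*Cq*lam₀⁻¹ + 1) * C' * Real.exp (-lam*t)
    rw [hφeq]
    -- bound the two integrals separately
    have hT1 : ‖∫ τ in Ioc (0:ℝ) t, cB t (p (icB τ (f τ)))‖
        ≤ (C*Cp*C') * (Real.exp (-(lam₀*t)) * ((Real.exp ((lam₀-lam)*t) - 1)/(lam₀-lam))) := by
      have hbd : ∀ τ ∈ Ioc (0:ℝ) t, ‖cB t (p (icB τ (f τ)))‖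
          ≤ (C*Cp*C') * (Real.exp (-(lam₀*t)) * Real.exp ((lam₀-lam)*τ)) := by
        intro τ hτ
        have hτ0 : τ ∈ Ici (0:ℝ) := le_of_lt hτ.1
        have hee : Real.exp (-lam₀*(t-τ)) * Real.exp (-lam*τ)
            = Real.exp (-(lam₀*t)) * Real.exp ((lam₀-lam)*τ) := by
          rw [← Real.exp_add, ← Real.exp_add]
          ring_nf
        calc ‖cB t (p (icB τ (f τ)))‖
            ≤ (C*Cp) * (Real.exp (-lam₀*(t-τ)) * ‖f τ‖) := hE1 τ hτ0 t hτ.2 (f τ)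
        _ ≤ (C*Cp) * (Real.exp (-lam₀*(t-τ)) * (C' * Real.exp (-lam*τ))) := by
            exact mul_le_mul_of_nonneg_left
              (mul_le_mul_of_nonneg_left (hfb τ hτ0) (Real.exp_pos _).le) (by positivity)
        _ = (C*Cp*C') * (Real.exp (-lam₀*(t-τ)) * Real.exp (-lam*τ)) := by ring
        _ = (C*Cp*C') * (Real.exp (-(lam₀*t)) * Real.exp ((lam₀-lam)*τ)) := by rw [hee]
      have hbint : MeasureTheory.IntegrableOn
          (fun τ => (C*Cp*C') * (Real.exp (-(lam₀*t)) * Real.exp ((lam₀-lam)*τ)))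
          (Ioc (0:ℝ) t) MeasureTheory.volume := by
        apply Continuous.integrableOn_Ioc
        fun_prop
      have hae : ∀ᵐ τ ∂(MeasureTheory.volume.restrict (Ioc (0:ℝ) t)),
          ‖cB t (p (icB τ (f τ)))‖
          ≤ (C*Cp*C') * (Real.exp (-(lam₀*t)) * Real.exp ((lam₀-lam)*τ)) := by
        rw [MeasureTheory.ae_restrict_iff' measurableSet_Ioc]
        filter_upwards with τ hτ
        exact hbd τ hτ
      refine (MeasureTheory.norm_integral_le_of_norm_le hbint hae).trans ?_
      rw [MeasureTheory.integral_const_mul, MeasureTheory.integral_const_mul]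
      have hval : ∫ τ in Ioc (0:ℝ) t, Real.exp ((lam₀-lam)*τ)
          = (Real.exp ((lam₀-lam)*t) - 1)/(lam₀-lam) := by
        rw [← intervalIntegral.integral_of_le ht, aux_integral_exp_mul hb.ne' 0 t]
        simp
      rw [hval]
    have hT2 : ‖∫ τ in Ioi t, cB t (icB τ (f τ) - p (icB τ (f τ)))‖
        ≤ (C*Cq*C'*(Real.exp (-(lam*t)) * Real.exp (lam₀*t))) * (Real.exp (-(lam₀*t))/lam₀) := by
      have hbd : ∀ τ ∈ Ioi t, ‖cB t (icB τ (f τ) - p (icB τ (f τ)))‖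
          ≤ (C*Cq*C'*(Real.exp (-(lam*t)) * Real.exp (lam₀*t))) * Real.exp (-(lam₀*τ)) := by
        intro τ hτ
        have htτ : t ≤ τ := le_of_lt hτ
        have hτ0 : τ ∈ Ici (0:ℝ) := le_trans ht htτ
        have he1 : Real.exp (-lam*τ) ≤ Real.exp (-(lam*t)) := by
          apply Real.exp_le_exp.2
          nlinarith
        have hee : Real.exp (lam₀*(t-τ)) = Real.exp (lam₀*t) * Real.exp (-(lam₀*τ)) := by
          rw [← Real.exp_add]
          ring_nf
        calc ‖cB t (icB τ (f τ) - p (icB τ (f τ)))‖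
            ≤ (C*Cq) * (Real.exp (lam₀*(t-τ)) * ‖f τ‖) := hE2 τ hτ0 t ht htτ (f τ)
        _ ≤ (C*Cq) * (Real.exp (lam₀*(t-τ)) * (C' * Real.exp (-lam*τ))) := by
            exact mul_le_mul_of_nonneg_left
              (mul_le_mul_of_nonneg_left (hfb τ hτ0) (Real.exp_pos _).le) (by positivity)
        _ ≤ (C*Cq) * (Real.exp (lam₀*(t-τ)) * (C' * Real.exp (-(lam*t)))) := by
            refine mul_le_mul_of_nonneg_left
              (mul_le_mul_of_nonneg_left
                (mul_le_mul_of_nonneg_left he1 hC'.le) (Real.exp_pos _).le) (by positivity)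
        _ = (C*Cq*C'*(Real.exp (-(lam*t)) * Real.exp (lam₀*t))) * Real.exp (-(lam₀*τ)) := by
            rw [hee]
            ring
      have hbint : MeasureTheory.IntegrableOn
          (fun τ => (C*Cq*C'*(Real.exp (-(lam*t)) * Real.exp (lam₀*t))) * Real.exp (-(lam₀*τ)))
          (Ioi t) MeasureTheory.volume := by
        have h := (exp_neg_integrableOn_Ioi t hl0).const_mul
          (C*Cq*C'*(Real.exp (-(lam*t)) * Real.exp (lam₀*t)))
        simpa [neg_mul, MeasureTheory.IntegrableOn] using h
      have hae : ∀ᵐ τ ∂(MeasureTheory.volume.restrict (Ioi t)),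
          ‖cB t (icB τ (f τ) - p (icB τ (f τ)))‖
          ≤ (C*Cq*C'*(Real.exp (-(lam*t)) * Real.exp (lam₀*t))) * Real.exp (-(lam₀*τ)) := by
        rw [MeasureTheory.ae_restrict_iff' measurableSet_Ioi]
        filter_upwards with τ hτ
        exact hbd τ hτ
      refine (MeasureTheory.norm_integral_le_of_norm_le hbint hae).trans ?_
      rw [MeasureTheory.integral_const_mul, aux_integral_exp_neg_Ioi hl0 t]
    have hnorm : ‖(∫ τ in Ioc (0:ℝ) t, cB t (p (icB τ (f τ))))
        - ∫ τ in Ioi t, cB t (icB τ (f τ) - p (icB τ (f τ)))‖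
        ≤ ‖∫ τ in Ioc (0:ℝ) t, cB t (p (icB τ (f τ)))‖
          + ‖∫ τ in Ioi t, cB t (icB τ (f τ) - p (icB τ (f τ)))‖ := norm_sub_le _ _
    refine (hnorm.trans (add_le_add hT1 hT2)).trans ?_
    -- final arithmetic
    have e1 : Real.exp (-(lam₀*t)) * Real.exp ((lam₀-lam)*t) = Real.exp (-lam*t) := by
      rw [← Real.exp_add]
      ring_nf
    have e2 : Real.exp (-(lam*t)) * Real.exp (lam₀*t) * (Real.exp (-(lam₀*t))/lam₀)
        = Real.exp (-lam*t) / lam₀ := by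
      have h1 : Real.exp (lam₀*t) * Real.exp (-(lam₀*t)) = 1 := by
        rw [← Real.exp_add]
        simp
      calc Real.exp (-(lam*t)) * Real.exp (lam₀*t) * (Real.exp (-(lam₀*t))/lam₀)
          = Real.exp (-(lam*t)) * (Real.exp (lam₀*t) * Real.exp (-(lam₀*t))) / lam₀ := by ring
      _ = Real.exp (-lam*t) / lam₀ := by rw [h1]; ring_nf
    have hexp_pos : 0 < Real.exp (-lam*t) := Real.exp_pos _
    have hT1' : (C*Cp*C') * (Real.exp (-(lam₀*t)) * ((Real.exp ((lam₀-lam)*t) - 1)/(lam₀-lam)))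
        ≤ (C*Cp*(lam₀ - lam₁)⁻¹) * (C' * Real.exp (-lam*t)) := by
      have hstep1 : Real.exp (-(lam₀*t)) * ((Real.exp ((lam₀-lam)*t) - 1)/(lam₀-lam))
          ≤ Real.exp (-lam*t) / (lam₀ - lam) := by
        rw [div_eq_mul_inv, div_eq_mul_inv, ← mul_assoc, ← e1]
        have : Real.exp (-(lam₀*t)) * (Real.exp ((lam₀-lam)*t) - 1)
            ≤ Real.exp (-(lam₀*t)) * Real.exp ((lam₀-lam)*t) := by
          nlinarith [Real.exp_pos (-(lam₀*t))]
        exact mul_le_mul_of_nonneg_right this (by positivity)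
      have hstep2 : Real.exp (-lam*t) / (lam₀ - lam) ≤ Real.exp (-lam*t) / (lam₀ - lam₁) := by
        apply div_le_div_of_nonneg_left hexp_pos.le hgap
        linarith [hlam.2]
      calc (C*Cp*C') * (Real.exp (-(lam₀*t)) * ((Real.exp ((lam₀-lam)*t) - 1)/(lam₀-lam)))
          ≤ (C*Cp*C') * (Real.exp (-lam*t) / (lam₀ - lam)) := by
            exact mul_le_mul_of_nonneg_left hstep1 (by positivity)
      _ ≤ (C*Cp*C') * (Real.exp (-lam*t) / (lam₀ - lam₁)) := by
            exact mul_le_mul_of_nonneg_left hstep2 (by positivity)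
      _ = (C*Cp*(lam₀ - lam₁)⁻¹) * (C' * Real.exp (-lam*t)) := by
            rw [div_eq_mul_inv]
            ring
    have hT2' : (C*Cq*C'*(Real.exp (-(lam*t)) * Real.exp (lam₀*t))) * (Real.exp (-(lam₀*t))/lam₀)
        = (C*Cq*lam₀⁻¹) * (C' * Real.exp (-lam*t)) := by
      rw [mul_assoc (C*Cq*C'), e2, div_eq_mul_inv]
      ring
    rw [hT2']
    have hfin : (C*Cp*(lam₀ - lam₁)⁻¹) * (C' * Real.exp (-lam*t))
        + (C*Cq*lam₀⁻¹) * (C' * Real.exp (-lam*t))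
        ≤ (C*Cp*(lam₀ - lam₁)⁻¹ + C*Cq*lam₀⁻¹ + 1) * C' * Real.exp (-lam*t) := by
      nlinarith [mul_pos hC' hexp_pos]
    linarith [hT1', hfin]
end
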